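/- arXiv:2406.06333 — 2 statements merged into one kernel-verified Lean document; each statement's English description precedes it below -/
import Mathlib

section
/- Let (W,S) be a finite Coxeter system with longest element w_0 and H its Hecke algebra over ℚ(v). Then Σ_{x ∈ W} (−v)^{−ℓ(x w_0)} δ_x = Σ_{x ∈ W} (−1)^{ℓ(x w_0)} P_{x w_0} b_x; that is, the change of basis from the standard to the Kazhdan–Lusztig basis carries the antisymmetriser quasi-idempotent Σ_x (−v)^{−ℓ(x w_0)} δ_x to the expression with coefficients (−1)^{ℓ(x w_0)} P_{x w_0}. -/
noncomputable section

/-- The field `ℚ(v)` of rational functions over `ℚ`. -/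
abbrev K : Type := RatFunc ℚ

/-- The indeterminate `v`. -/
def v : K := RatFunc.X

/-- The Hecke algebra of a finite Coxeter system `cs`, presented as a `ℚ(v)`-algebra `H`
equipped with a standard basis `{δ_x : x ∈ W}` satisfying the quadratic relation
`(δ_s + v)(δ_s - v⁻¹) = 0` and `δ_x δ_y = δ_{xy}` whenever lengths add. -/
structure HeckeAlgebra {B W : Type*} [Group W] {M : CoxeterMatrix B}
    (cs : CoxeterSystem M W) (H : Type*) [Ring H] [Algebra K H] where
  δ : W → H
  basis : Module.Basis W K H
  basis_eq : ∀ x : W, basis x = δ x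
  δ_one : δ 1 = 1
  quadratic : ∀ i : B,
    (δ (cs.simple i) + v • (1 : H)) * (δ (cs.simple i) - v⁻¹ • (1 : H)) = 0
  δ_mul : ∀ x y : W, cs.length (x * y) = cs.length x + cs.length y →
    δ x * δ y = δ (x * y)

/-- A Kazhdan–Lusztig basis datum (Soergel's normalisation) for a Hecke algebra:
the canonical basis elements `b x = Σ_y h_{y,x}(v) δ_y` with `h_{x,x} = 1`,
`h_{y,x} ∈ v ℤ[v]` for `y ≠ x`, each `b x` being fixed by the bar involution
(the `ℤ`-algebra involution with `v ↦ v⁻¹` and `δ_x ↦ δ_{x⁻¹}⁻¹`). -/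
structure KLBasis {B W : Type*} [Group W] [Fintype W] {M : CoxeterMatrix B}
    {cs : CoxeterSystem M W} {H : Type*} [Ring H] [Algebra K H]
    (A : HeckeAlgebra cs H) where
  b : W → H
  h : W → W → Polynomial ℤ
  b_eq : ∀ x : W, b x = ∑ y : W, (Polynomial.aeval v (h y x)) • A.δ y
  h_self : ∀ x : W, h x x = 1
  h_lower : ∀ y x : W, y ≠ x → (h y x).coeff 0 = 0
  barK : K →+* K
  barK_v : barK v = v⁻¹
  bar : H →+* H
  bar_smul : ∀ (f : K) (a : H), bar (f • a) = barK f • bar a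
  bar_δ : ∀ x : W, bar (A.δ x) = Ring.inverse (A.δ x⁻¹)
  bar_b : ∀ x : W, bar (b x) = b x

/-- The Laurent polynomial `P_x := Σ_{y} v^{-ℓ(y)} h_{y,x}`, viewed in `ℚ(v)`. -/
def KLBasis.P {B W : Type*} [Group W] [Fintype W] {M : CoxeterMatrix B}
    {cs : CoxeterSystem M W} {H : Type*} [Ring H] [Algebra K H]
    {A : HeckeAlgebra cs H} (kl : KLBasis A) (x : W) : K :=
  ∑ y : W, v ^ (-(cs.length y : ℤ)) * Polynomial.aeval v (kl.h y x)

set_option linter.unusedSectionVars false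
set_option maxHeartbeats 1000000
set_option synthInstance.maxHeartbeats 200000

namespace Scratch

open Polynomial

variable {B W : Type*} [Group W] [Fintype W] {M : CoxeterMatrix B}
    {cs : CoxeterSystem M W} {H : Type*} [Ring H] [Algebra K H]

lemma v_ne : (v : K) ≠ 0 := RatFunc.X_ne_zero

variable (A : HeckeAlgebra cs H)

lemma delta_sq (i : B) : A.δ (cs.simple i) * A.δ (cs.simple i)
    = 1 + (v⁻¹ - v) • A.δ (cs.simple i) := by
  have h := A.quadratic i
  set a := A.δ (cs.simple i) with ha
  have h2 : a * a - (1 + (v⁻¹ - v) • a) = 0 := by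
    rw [← h]
    simp only [mul_sub, add_mul, mul_add, smul_add, smul_mul_assoc, mul_smul_comm, smul_smul, one_mul, mul_one,
      mul_inv_cancel₀ v_ne, inv_mul_cancel₀ v_ne, one_smul, sub_smul]
    abel
  exact sub_eq_zero.mp h2

lemma delta_mul_right_up {y : W} {i : B} (h : cs.length (y * cs.simple i) = cs.length y + 1) :
    A.δ y * A.δ (cs.simple i) = A.δ (y * cs.simple i) :=
  A.δ_mul y (cs.simple i) (by rw [cs.length_simple]; omega)

lemma delta_mul_right_down {y : W} {i : B} (h : cs.length (y * cs.simple i) + 1 = cs.length y) :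
    A.δ y * A.δ (cs.simple i) = A.δ (y * cs.simple i) + (v⁻¹ - v) • A.δ y := by
  have hy : (y * cs.simple i) * cs.simple i = y := by
    rw [mul_assoc, cs.simple_mul_simple_self, mul_one]
  have h2 : cs.length ((y * cs.simple i) * cs.simple i) = cs.length (y * cs.simple i) + 1 := by
    rw [hy]; omega
  have e1 : A.δ y = A.δ (y * cs.simple i) * A.δ (cs.simple i) := by
    rw [delta_mul_right_up A h2, hy]
  calc A.δ y * A.δ (cs.simple i)
      = A.δ (y * cs.simple i) * (A.δ (cs.simple i) * A.δ (cs.simple i)) := by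
        rw [e1, mul_assoc]
    _ = A.δ (y * cs.simple i) + (v⁻¹ - v) • A.δ y := by
        rw [delta_sq A i, mul_add, mul_one, mul_smul_comm, ← e1]

lemma delta_mul_left_up {u : W} {i : B} (h : cs.length (cs.simple i * u) = cs.length u + 1) :
    A.δ (cs.simple i) * A.δ u = A.δ (cs.simple i * u) :=
  A.δ_mul (cs.simple i) u (by rw [cs.length_simple]; omega)

lemma delta_mul_left_down {u : W} {i : B} (h : cs.length (cs.simple i * u) + 1 = cs.length u) :
    A.δ (cs.simple i) * A.δ u = A.δ (cs.simple i * u) + (v⁻¹ - v) • A.δ u := by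
  have hu : cs.simple i * (cs.simple i * u) = u := by
    rw [← mul_assoc, cs.simple_mul_simple_self, one_mul]
  have h2 : cs.length (cs.simple i * (cs.simple i * u)) = cs.length (cs.simple i * u) + 1 := by
    rw [hu]; omega
  have e1 : A.δ u = A.δ (cs.simple i) * A.δ (cs.simple i * u) := by
    rw [delta_mul_left_up A h2, hu]
  calc A.δ (cs.simple i) * A.δ u
      = (A.δ (cs.simple i) * A.δ (cs.simple i)) * A.δ (cs.simple i * u) := by
        rw [e1, mul_assoc]
    _ = A.δ (cs.simple i * u) + (v⁻¹ - v) • A.δ u := by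
        rw [delta_sq A i, add_mul, one_mul, smul_mul_assoc, ← e1]

/-- The explicit unit for `δ_s`. -/
lemma simple_mul_inv_eq_one (i : B) :
    A.δ (cs.simple i) * (A.δ (cs.simple i) + (v - v⁻¹) • 1) = 1 := by
  rw [mul_add, delta_sq A i, mul_smul_comm, mul_one]
  rw [add_assoc, ← add_smul]
  simp

lemma inv_mul_simple_eq_one (i : B) :
    (A.δ (cs.simple i) + (v - v⁻¹) • 1) * A.δ (cs.simple i) = 1 := by
  rw [add_mul, delta_sq A i, smul_mul_assoc, one_mul]
  rw [add_assoc, ← add_smul]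
  simp

def sUnit (i : B) : Hˣ :=
  ⟨A.δ (cs.simple i), A.δ (cs.simple i) + (v - v⁻¹) • 1,
    simple_mul_inv_eq_one A i, inv_mul_simple_eq_one A i⟩

lemma isUnit_delta_simple (i : B) : IsUnit (A.δ (cs.simple i)) := ⟨sUnit A i, rfl⟩

lemma ringInverse_simple (i : B) :
    Ring.inverse (A.δ (cs.simple i)) = A.δ (cs.simple i) + (v - v⁻¹) • 1 :=
  Ring.inverse_unit (sUnit A i)

lemma isUnit_delta_aux : ∀ (n : ℕ) (y : W), cs.length y ≤ n → IsUnit (A.δ y) := by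
  intro n
  induction n with
  | zero =>
    intro y hy
    have h1 : y = 1 := cs.length_eq_zero_iff.mp (Nat.le_zero.mp hy)
    rw [h1, A.δ_one]; exact isUnit_one
  | succ n ih =>
    intro y hy
    by_cases h1 : y = 1
    · rw [h1, A.δ_one]; exact isUnit_one
    · obtain ⟨i, hi⟩ := cs.exists_rightDescent_of_ne_one h1
      have hlen : cs.length (y * cs.simple i) + 1 = cs.length y :=
        (cs.isRightDescent_iff).mp hi
      have h2 : cs.length ((y * cs.simple i) * cs.simple i)
          = cs.length (y * cs.simple i) + 1 := by
        rw [mul_assoc, cs.simple_mul_simple_self, mul_one]; omega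
      have e1 : A.δ y = A.δ (y * cs.simple i) * A.δ (cs.simple i) := by
        rw [delta_mul_right_up A h2, mul_assoc, cs.simple_mul_simple_self, mul_one]
      rw [e1]
      exact (ih (y * cs.simple i) (by omega)).mul (isUnit_delta_simple A i)

lemma isUnit_delta (y : W) : IsUnit (A.δ y) := isUnit_delta_aux A (cs.length y) y le_rfl

lemma delta_mul_inverse (y : W) : A.δ y * Ring.inverse (A.δ y) = 1 :=
  Ring.mul_inverse_cancel _ (isUnit_delta A y)

lemma inverse_mul_delta (y : W) : Ring.inverse (A.δ y) * A.δ y = 1 :=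
  Ring.inverse_mul_cancel _ (isUnit_delta A y)

lemma inverse_mul_rev {a b : H} (ha : IsUnit a) (hb : IsUnit b) :
    Ring.inverse (a * b) = Ring.inverse b * Ring.inverse a := by
  obtain ⟨u, rfl⟩ := ha
  obtain ⟨w, rfl⟩ := hb
  rw [← Units.val_mul, Ring.inverse_unit, Ring.inverse_unit, Ring.inverse_unit, mul_inv_rev,
    Units.val_mul]

/-- The coefficient-extraction functional at `t`. -/
def coeffw (t : W) : H →ₗ[K] K := (Finsupp.lapply t).comp (A.basis.repr : H →ₗ[K] (W →₀ K))

lemma repr_delta (u : W) : A.basis.repr (A.δ u) = Finsupp.single u 1 := by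
  rw [← A.basis_eq]; exact A.basis.repr_self u

lemma coeffw_delta [DecidableEq W] (t u : W) :
    coeffw A t (A.δ u) = if u = t then 1 else 0 := by
  simp [coeffw, repr_delta, Finsupp.single_apply]

lemma sum_repr (X : H) : ∑ y : W, A.basis.repr X y • A.δ y = X := by
  have h := A.basis.sum_equivFun X
  simp only [Module.Basis.equivFun_apply, A.basis_eq] at h
  exact h

section Gamma

variable (w₀ : W) (hw₀ : ∀ x : W, cs.length (x * w₀) + cs.length x = cs.length w₀)

include hw₀ in
/-- Top-coefficient structure constants: `[δ_{w₀}](δ_y⁻¹ · δ_u) = [u = y w₀]`. -/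
lemma coeffw_inverse_mul [DecidableEq W] :
    ∀ (n : ℕ) (y u : W), cs.length y ≤ n →
      coeffw A w₀ (Ring.inverse (A.δ y) * A.δ u) = if u = y * w₀ then 1 else 0 := by
  intro n
  induction n with
  | zero =>
    intro y u hy
    have h1 : y = 1 := cs.length_eq_zero_iff.mp (Nat.le_zero.mp hy)
    rw [h1, A.δ_one, Ring.inverse_one, one_mul, coeffw_delta, one_mul]
  | succ n ih =>
    intro y u hy
    by_cases h1 : y = 1
    · rw [h1, A.δ_one, Ring.inverse_one, one_mul, coeffw_delta, one_mul]
    · obtain ⟨i, hi⟩ := cs.exists_leftDescent_of_ne_one h1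
      have hlen : cs.length (cs.simple i * y) + 1 = cs.length y :=
        (cs.isLeftDescent_iff).mp hi
      set y' := cs.simple i * y with hy'
      have hyy : y = cs.simple i * y' := by
        rw [hy', ← mul_assoc, cs.simple_mul_simple_self, one_mul]
      have hlen2 : cs.length (cs.simple i * y') = cs.length y' + 1 := by
        rw [← hyy]; omega
      have hδ : A.δ y = A.δ (cs.simple i) * A.δ y' := by
        rw [delta_mul_left_up A hlen2, ← hyy]
      have hiv : Ring.inverse (A.δ y)
          = Ring.inverse (A.δ y') * Ring.inverse (A.δ (cs.simple i)) := by
        rw [hδ, inverse_mul_rev (isUnit_delta_simple A i) (isUnit_delta A y')]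
      have hcond : ∀ z : W, (cs.simple i * u = y' * w₀ ∧ z = u) ↔ (u = y * w₀ ∧ z = u) := by
        intro z
        constructor
        · rintro ⟨h2, rfl⟩
          refine ⟨?_, rfl⟩
          rw [hyy, mul_assoc, ← h2, ← mul_assoc, cs.simple_mul_simple_self, one_mul]
        · rintro ⟨h2, rfl⟩
          refine ⟨?_, rfl⟩
          rw [h2, hyy, ← mul_assoc, ← mul_assoc, cs.simple_mul_simple_self, one_mul]
      have hcond' : (cs.simple i * u = y' * w₀) ↔ (u = y * w₀) := by
        have := hcond u; tauto
      rw [hiv, mul_assoc, ringInverse_simple, add_mul, smul_mul_assoc, one_mul]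
      rcases cs.length_simple_mul u i with hud | hud
      · -- up case : ℓ(s u) = ℓ u + 1
        rw [delta_mul_left_up A hud]
        simp only [mul_add, mul_smul_comm, map_add, map_smul]
        rw [ih y' (cs.simple i * u) (by omega), ih y' u (by omega)]
        have hzero : ¬ (u = y' * w₀) := by
          intro hcontra
          have l1 : cs.length (cs.simple i * u) = cs.length (y * w₀) := by
            rw [hcontra, ← mul_assoc, ← hyy]
          have l2 := hw₀ y
          have l3 := hw₀ y'
          have l4 : cs.length u = cs.length (y' * w₀) := by rw [hcontra]
          omega
        rw [if_neg hzero, smul_zero, add_zero]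
        simp only [hcond']
      · -- down case: ℓ(s u) + 1 = ℓ u
        rw [delta_mul_left_down A hud]
        simp only [mul_add, mul_smul_comm, map_add, map_smul]
        rw [ih y' (cs.simple i * u) (by omega), ih y' u (by omega)]
        simp only [hcond']
        by_cases hq : u = y * w₀ <;> simp [hq, smul_eq_mul] <;> split_ifs <;> ring

end Gamma

section Theta

variable (kl : KLBasis A)

lemma barK_vinv : kl.barK v⁻¹ = v := by
  have h : kl.barK v * kl.barK v⁻¹ = 1 := by rw [← map_mul, mul_inv_cancel₀ v_ne, map_one]
  rw [kl.barK_v] at h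
  have h2 := inv_eq_of_mul_eq_one_right h
  rw [inv_inv] at h2
  exact h2.symm

def theta : H →+ H where
  toFun X := ∑ y : W, ((-1 : K) ^ (cs.length y) * kl.barK (A.basis.repr X y)) • A.δ y⁻¹
  map_zero' := by simp
  map_add' X Y := by
    simp only [map_add, Finsupp.add_apply, map_add, mul_add, add_smul]
    rw [Finset.sum_add_distrib]

lemma theta_apply (X : H) : theta A kl X
    = ∑ y : W, ((-1 : K) ^ (cs.length y) * kl.barK (A.basis.repr X y)) • A.δ y⁻¹ := rfl

lemma theta_smul (f : K) (X : H) : theta A kl (f • X) = kl.barK f • theta A kl X := by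
  simp only [theta_apply, map_smul, Finsupp.smul_apply, smul_eq_mul, map_mul, Finset.smul_sum,
    smul_smul]
  exact Finset.sum_congr rfl fun y _ => by ring_nf

lemma theta_delta (u : W) :
    theta A kl (A.δ u) = ((-1 : K) ^ (cs.length u)) • A.δ u⁻¹ := by
  classical
  simp only [theta_apply, repr_delta, Finsupp.single_apply]
  rw [Finset.sum_eq_single u]
  · simp
  · intro b _ hb; simp [Ne.symm hb]
  · intro h; exact absurd (Finset.mem_univ u) h

lemma theta_one : theta A kl 1 = 1 := by
  rw [← A.δ_one, theta_delta]
  simp [A.δ_one, cs.length_one]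

lemma theta_mul_simple (i : B) (X : H) :
    theta A kl (X * A.δ (cs.simple i)) = theta A kl (A.δ (cs.simple i)) * theta A kl X := by
  have base : ∀ y : W, theta A kl (A.δ y * A.δ (cs.simple i))
      = theta A kl (A.δ (cs.simple i)) * theta A kl (A.δ y) := by
    intro y
    have hinv : (y * cs.simple i)⁻¹ = cs.simple i * y⁻¹ := by
      rw [mul_inv_rev, cs.inv_simple]
    rcases cs.length_mul_simple y i with h | h
    · -- up
      have hl : cs.length (cs.simple i * y⁻¹) = cs.length y⁻¹ + 1 := by
        rw [← hinv, cs.length_inv, cs.length_inv]; omega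
      rw [delta_mul_right_up A h, theta_delta, theta_delta, theta_delta, smul_mul_assoc,
        mul_smul_comm, smul_smul, cs.inv_simple, delta_mul_left_up A hl, ← hinv, h,
        cs.length_simple]
      congr 1
      ring
    · -- down
      have hl : cs.length (cs.simple i * y⁻¹) + 1 = cs.length y⁻¹ := by
        rw [← hinv, cs.length_inv, cs.length_inv]; omega
      have hm : cs.length y = cs.length (y * cs.simple i) + 1 := h.symm
      rw [delta_mul_right_down A h, map_add, theta_smul, theta_delta, theta_delta, theta_delta,
        cs.inv_simple, smul_mul_assoc, mul_smul_comm, smul_smul, delta_mul_left_down A hl,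
        ← hinv, cs.length_simple, hm, map_sub, barK_vinv, kl.barK_v]
      simp only [mul_add, smul_add, smul_smul]
      congr 1
      · congr 1; ring
      · congr 1; ring
  calc theta A kl (X * A.δ (cs.simple i))
      = theta A kl ((∑ y : W, A.basis.repr X y • A.δ y) * A.δ (cs.simple i)) := by
        rw [sum_repr]
    _ = ∑ y : W, kl.barK (A.basis.repr X y) • theta A kl (A.δ y * A.δ (cs.simple i)) := by
        rw [Finset.sum_mul, map_sum]
        exact Finset.sum_congr rfl fun y _ => by rw [smul_mul_assoc, theta_smul]
    _ = ∑ y : W, kl.barK (A.basis.repr X y)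
          • (theta A kl (A.δ (cs.simple i)) * theta A kl (A.δ y)) := by
        exact Finset.sum_congr rfl fun y _ => by rw [base y]
    _ = theta A kl (A.δ (cs.simple i)) * theta A kl X := by
        conv_rhs => rw [← sum_repr A X, map_sum]
        rw [Finset.mul_sum]
        exact Finset.sum_congr rfl fun y _ => by rw [theta_smul, mul_smul_comm]

lemma theta_mul_delta : ∀ (n : ℕ) (y : W) (X : H), cs.length y ≤ n →
    theta A kl (X * A.δ y) = theta A kl (A.δ y) * theta A kl X := by
  intro n
  induction n with
  | zero =>
    intro y X hy
    have h1 : y = 1 := cs.length_eq_zero_iff.mp (Nat.le_zero.mp hy)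
    rw [h1, A.δ_one, mul_one, theta_one, one_mul]
  | succ n ih =>
    intro y X hy
    by_cases h1 : y = 1
    · rw [h1, A.δ_one, mul_one, theta_one, one_mul]
    · obtain ⟨i, hi⟩ := cs.exists_rightDescent_of_ne_one h1
      have hlen : cs.length (y * cs.simple i) + 1 = cs.length y := cs.isRightDescent_iff.mp hi
      set y' := y * cs.simple i with hy'
      have hyy : y' * cs.simple i = y := by
        rw [hy', mul_assoc, cs.simple_mul_simple_self, mul_one]
      have hup : cs.length (y' * cs.simple i) = cs.length y' + 1 := by rw [hyy]; omega
      have hδ : A.δ y = A.δ y' * A.δ (cs.simple i) := by rw [delta_mul_right_up A hup, hyy]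
      rw [hδ, ← mul_assoc, theta_mul_simple, ih y' X (by omega), ← mul_assoc,
        ← theta_mul_simple]

lemma theta_mul (X Y : H) : theta A kl (X * Y) = theta A kl Y * theta A kl X := by
  calc theta A kl (X * Y) = theta A kl (X * ∑ y : W, A.basis.repr Y y • A.δ y) := by
        rw [sum_repr]
    _ = ∑ y : W, kl.barK (A.basis.repr Y y) • (theta A kl (A.δ y) * theta A kl X) := by
        rw [Finset.mul_sum, map_sum]
        exact Finset.sum_congr rfl fun y _ => by
          rw [mul_smul_comm, theta_smul, theta_mul_delta A kl (cs.length y) y X le_rfl]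
    _ = theta A kl Y * theta A kl X := by
        conv_rhs => rw [← sum_repr A Y, map_sum]
        rw [Finset.sum_mul]
        exact Finset.sum_congr rfl fun y _ => by rw [theta_smul, smul_mul_assoc]

lemma theta_inverse (y : W) :
    theta A kl (Ring.inverse (A.δ y)) = ((-1 : K) ^ (cs.length y)) • Ring.inverse (A.δ y⁻¹) := by
  have h1 : theta A kl (Ring.inverse (A.δ y)) * theta A kl (A.δ y) = 1 := by
    rw [← theta_mul, delta_mul_inverse, theta_one]
  have h2 : theta A kl (A.δ y)
      * (((-1 : K) ^ (cs.length y)) • Ring.inverse (A.δ y⁻¹)) = 1 := by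
    rw [theta_delta, smul_mul_smul_comm, ← pow_add, delta_mul_inverse]
    rw [show cs.length y + cs.length y = 2 * cs.length y by ring, pow_mul]
    simp
  calc theta A kl (Ring.inverse (A.δ y))
      = theta A kl (Ring.inverse (A.δ y)) * (theta A kl (A.δ y)
          * (((-1 : K) ^ (cs.length y)) • Ring.inverse (A.δ y⁻¹))) := by rw [h2, mul_one]
    _ = ((-1 : K) ^ (cs.length y)) • Ring.inverse (A.δ y⁻¹) := by
        rw [← mul_assoc, h1, one_mul]

end Theta

section BarFacts

variable (kl : KLBasis A)

lemma coeffw_apply (t : W) (X : H) : coeffw A t X = A.basis.repr X t := rfl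

lemma bar_inverse_delta (y : W) : kl.bar (Ring.inverse (A.δ y)) = A.δ y⁻¹ := by
  have h1 : kl.bar (A.δ y) * kl.bar (Ring.inverse (A.δ y)) = 1 := by
    rw [← map_mul, delta_mul_inverse, map_one]
  rw [kl.bar_δ] at h1
  calc kl.bar (Ring.inverse (A.δ y))
      = (A.δ y⁻¹ * Ring.inverse (A.δ y⁻¹)) * kl.bar (Ring.inverse (A.δ y)) := by
        rw [delta_mul_inverse, one_mul]
    _ = A.δ y⁻¹ := by rw [mul_assoc, h1, mul_one]

lemma b_eq_bar (x : W) :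
    kl.b x = ∑ y : W, kl.barK (Polynomial.aeval v (kl.h y x)) • Ring.inverse (A.δ y⁻¹) := by
  conv_lhs => rw [← kl.bar_b x, kl.b_eq]
  rw [map_sum]
  exact Finset.sum_congr rfl fun y _ => by rw [kl.bar_smul, kl.bar_δ]

lemma barK_aeval (x : K) (p : Polynomial ℤ) :
    kl.barK (Polynomial.aeval x p) = Polynomial.aeval (kl.barK x) p := by
  rw [Polynomial.aeval_def, Polynomial.aeval_def, Polynomial.hom_eval₂]
  congr 1
  exact Subsingleton.elim _ _

lemma doubleBarK (p : Polynomial ℤ) :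
    kl.barK (kl.barK (Polynomial.aeval v p)) = Polynomial.aeval v p := by
  rw [barK_aeval, barK_aeval, kl.barK_v, barK_vinv]

/-- The element `θ(b_x)`. -/
def betaE (x : W) : H := theta A kl (kl.b x)

lemma betaE_expr1 (x : W) : betaE A kl x
    = ∑ y : W, ((-1 : K) ^ (cs.length y) * kl.barK (Polynomial.aeval v (kl.h y x)))
        • A.δ y⁻¹ := by
  rw [betaE, kl.b_eq, map_sum]
  exact Finset.sum_congr rfl fun y _ => by
    rw [theta_smul, theta_delta, smul_smul]
    congr 1
    ring

lemma betaE_expr2 (x : W) : betaE A kl x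
    = ∑ y : W, ((-1 : K) ^ (cs.length y) * Polynomial.aeval v (kl.h y x))
        • Ring.inverse (A.δ y) := by
  rw [betaE, b_eq_bar, map_sum]
  exact Finset.sum_congr rfl fun y _ => by
    rw [theta_smul, theta_inverse, doubleBarK, smul_smul, inv_inv, cs.length_inv]
    congr 1
    ring

lemma bar_betaE (x : W) : kl.bar (betaE A kl x) = betaE A kl x := by
  conv_lhs => rw [betaE_expr2, map_sum]
  rw [betaE_expr1]
  exact Finset.sum_congr rfl fun y _ => by
    rw [kl.bar_smul, bar_inverse_delta, map_mul, map_pow, map_neg, map_one]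

end BarFacts

section Inv

variable (kl : KLBasis A) [DecidableEq W]
variable (w₀ : W) (hw₀ : ∀ x : W, cs.length (x * w₀) + cs.length x = cs.length w₀)

include hw₀ in
lemma coeffw_bar (X : H) : coeffw A w₀ (kl.bar X) = kl.barK (coeffw A w₀ X) := by
  conv_lhs => rw [← sum_repr A X, map_sum, map_sum]
  have hterm : ∀ y : W, coeffw A w₀ (kl.bar (A.basis.repr X y • A.δ y))
      = kl.barK (A.basis.repr X y) * (if y = w₀ then 1 else 0) := by
    intro y
    rw [kl.bar_smul, kl.bar_δ, map_smul, smul_eq_mul]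
    congr 1
    have h2 := coeffw_inverse_mul A w₀ hw₀ (cs.length y⁻¹) y⁻¹ 1 le_rfl
    rw [A.δ_one, mul_one] at h2
    rw [h2]
    congr 1
    simp only [eq_comm (a := (1 : W)), eq_iff_iff]
    constructor
    · intro h3
      have : y⁻¹ = w₀⁻¹ := mul_eq_one_iff_eq_inv.mp h3
      rwa [inv_inj] at this
    · intro h3; rw [h3, inv_mul_cancel]
  rw [Finset.sum_congr rfl fun y _ => hterm y]
  simp [coeffw_apply]

include hw₀ in
lemma coeffw_betaE_mul (x z : W) :
    coeffw A w₀ (betaE A kl x * kl.b z)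
      = ∑ y : W, (-1 : K) ^ (cs.length y) * Polynomial.aeval v (kl.h y x)
          * Polynomial.aeval v (kl.h (y * w₀) z) := by
  rw [betaE_expr2, kl.b_eq, Finset.sum_mul]
  rw [map_sum]
  refine Finset.sum_congr rfl fun y _ => ?_
  rw [Finset.mul_sum, map_sum]
  have hterm : ∀ u : W,
      coeffw A w₀ (((-1 : K) ^ (cs.length y) * Polynomial.aeval v (kl.h y x))
        • Ring.inverse (A.δ y) * (Polynomial.aeval v (kl.h u z) • A.δ u))
      = if u = y * w₀ then (-1 : K) ^ (cs.length y) * Polynomial.aeval v (kl.h y x)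
          * Polynomial.aeval v (kl.h u z) else 0 := by
    intro u
    rw [smul_mul_assoc, mul_smul_comm, smul_smul, map_smul, smul_eq_mul,
      coeffw_inverse_mul A w₀ hw₀ (cs.length y) y u le_rfl]
    by_cases hq : u = y * w₀ <;> simp [hq] <;> ring
  rw [Finset.sum_congr rfl fun u _ => hterm u]
  rw [Finset.sum_ite_eq' Finset.univ (y * w₀)]
  simp

end Inv

section Poly

open Polynomial

lemma aeval_v_eq (p : Polynomial ℤ) :
    Polynomial.aeval v p = algebraMap (Polynomial ℚ) K (p.map (Int.castRingHom ℚ)) := by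
  have h : ((Polynomial.aeval v).toRingHom : Polynomial ℤ →+* K)
      = (algebraMap (Polynomial ℚ) K).comp (Polynomial.mapRingHom (Int.castRingHom ℚ)) := by
    apply Polynomial.ringHom_ext
    · intro a
      simp [RatFunc.algebraMap_C]
    · simp [v, RatFunc.algebraMap_X]
  have h2 := RingHom.congr_fun h p
  simpa using h2

lemma aeval_v_injective : Function.Injective (fun p : Polynomial ℤ => Polynomial.aeval v p) := by
  intro p q h
  simp only [aeval_v_eq] at h
  have h3 := RatFunc.algebraMap_injective (K := ℚ) h
  exact Polynomial.map_injective (Int.castRingHom ℚ) Int.cast_injective h3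

lemma aeval_selfdual_const (p : Polynomial ℤ)
    (hp : Polynomial.aeval (v⁻¹ : K) p = Polynomial.aeval v p) :
    Polynomial.aeval v p = ((p.coeff 0 : ℤ) : K) := by
  set n := p.natDegree with hn
  have hv : Invertible (v⁻¹ : K) := invertibleOfNonzero (inv_ne_zero v_ne)
  have h1 := Polynomial.eval₂_reflect_mul_pow (algebraMap ℤ K) (v⁻¹) n p le_rfl
  rw [invOf_eq_inv, inv_inv] at h1
  rw [← Polynomial.aeval_def, ← Polynomial.aeval_def, hp] at h1
  have h2 : Polynomial.aeval v (reflect n p) = Polynomial.aeval v (p * X ^ n) := by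
    rw [map_mul, Polynomial.aeval_X_pow]
    calc Polynomial.aeval v (reflect n p)
        = (Polynomial.aeval v (reflect n p) * (v⁻¹) ^ n) * v ^ n := by
          rw [mul_assoc, inv_pow, inv_mul_cancel₀ (pow_ne_zero n v_ne), mul_one]
      _ = Polynomial.aeval v p * v ^ n := by rw [h1]
  have h3 : reflect n p = p * X ^ n := aeval_v_injective h2
  have hco : ∀ k : ℕ, 1 ≤ k → p.coeff k = 0 := by
    intro k hk
    have h4 := congrArg (fun q : Polynomial ℤ => q.coeff (n + k)) h3
    simp only [Polynomial.coeff_reflect] at h4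
    rw [Polynomial.revAt_eq_self_of_lt (by omega), add_comm n k, Polynomial.coeff_mul_X_pow] at h4
    rw [← h4]
    exact Polynomial.coeff_eq_zero_of_natDegree_lt (by omega)
  have h5 : p = Polynomial.C (p.coeff 0) := by
    ext m
    rcases Nat.eq_zero_or_pos m with hm | hm
    · simp [hm]
    · rw [Polynomial.coeff_C, if_neg (by omega), hco m hm]
  rw [h5]
  simp

end Poly

section InvMain

variable (kl : KLBasis A) [DecidableEq W] (w₀ : W)
  (hw₀ : ∀ x : W, cs.length (x * w₀) + cs.length x = cs.length w₀)

include hw₀ in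
/-- The Kazhdan-Lusztig inversion formula. -/
lemma inversion (x z : W) :
    (∑ y : W, (-1 : K) ^ (cs.length y) * Polynomial.aeval v (kl.h y x)
        * Polynomial.aeval v (kl.h (y * w₀) z))
      = if x * w₀ = z then (-1 : K) ^ (cs.length x) else 0 := by
  set p : Polynomial ℤ :=
    ∑ y : W, (-1 : Polynomial ℤ) ^ (cs.length y) * (kl.h y x * kl.h (y * w₀) z) with hp
  have haev : Polynomial.aeval v p = ∑ y : W, (-1 : K) ^ (cs.length y)
      * Polynomial.aeval v (kl.h y x) * Polynomial.aeval v (kl.h (y * w₀) z) := by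
    rw [hp, map_sum]
    exact Finset.sum_congr rfl fun y _ => by
      rw [map_mul, map_mul, map_pow, map_neg, map_one, mul_assoc]
  have hQ : Polynomial.aeval v p = coeffw A w₀ (betaE A kl x * kl.b z) := by
    rw [haev, coeffw_betaE_mul A kl w₀ hw₀ x z]
  have hbar : kl.barK (Polynomial.aeval v p) = Polynomial.aeval v p := by
    rw [hQ, ← coeffw_bar A kl w₀ hw₀, map_mul, bar_betaE, kl.bar_b]
  rw [barK_aeval, kl.barK_v] at hbar
  have hconst := aeval_selfdual_const p hbar
  have hc0 : p.coeff 0 = if x * w₀ = z then (-1 : ℤ) ^ (cs.length x) else 0 := by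
    rw [hp, Polynomial.finset_sum_coeff]
    have hterm : ∀ y : W,
        ((-1 : Polynomial ℤ) ^ (cs.length y) * (kl.h y x * kl.h (y * w₀) z)).coeff 0
        = if y = x then (if x * w₀ = z then (-1 : ℤ) ^ (cs.length x) else 0) else 0 := by
      intro y
      rw [Polynomial.mul_coeff_zero, Polynomial.mul_coeff_zero]
      have hsign : ((-1 : Polynomial ℤ) ^ (cs.length y)).coeff 0 = (-1 : ℤ) ^ (cs.length y) := by
        rw [← Polynomial.C_1, ← Polynomial.C_neg, ← Polynomial.C_pow, Polynomial.coeff_C_zero]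
      rw [hsign]
      by_cases h1 : y = x
      · subst h1
        rw [kl.h_self]
        by_cases h2 : y * w₀ = z
        · rw [h2, kl.h_self]
          simp
        · rw [kl.h_lower _ _ h2]
          simp [h2]
      · rw [kl.h_lower _ _ h1]
        simp [h1]
    rw [Finset.sum_congr rfl fun y _ => hterm y, Finset.sum_ite_eq' Finset.univ x]
    simp
  rw [← haev, hconst, hc0]
  split_ifs <;> simp

end InvMain

section Final

variable (kl : KLBasis A) [DecidableEq W] (w₀ : W)
  (hw₀ : ∀ x : W, cs.length (x * w₀) + cs.length x = cs.length w₀)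

include hw₀ in
lemma w0_sq : w₀ * w₀ = 1 := by
  have h := hw₀ w₀
  exact cs.length_eq_zero_iff.mp (by omega)

include hw₀ in
lemma mul_w0_w0 (x : W) : x * w₀ * w₀ = x := by
  rw [mul_assoc, w0_sq w₀ hw₀, mul_one]

open Matrix in
include hw₀ in
lemma inversion_transposed (u y : W) :
    (∑ x : W, (-1 : K) ^ (cs.length x) * Polynomial.aeval v (kl.h u x)
        * Polynomial.aeval v (kl.h y (x * w₀)))
      = if u * w₀ = y then (-1 : K) ^ (cs.length u) else 0 := by
  set Mm : Matrix W W K := Matrix.of fun a b => Polynomial.aeval v (kl.h a b) with hM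
  set J : Matrix W W K :=
    Matrix.of (fun a b => if a * w₀ = b then (-1 : K) ^ (cs.length a) else 0) with hJ
  set ε : K := (-1 : K) ^ (cs.length w₀) with he
  have hee : ε * ε = 1 := by
    rw [he, ← pow_add, ← two_mul, pow_mul]
    norm_num
  have hJJ : J * J = ε • (1 : Matrix W W K) := by
    ext a c
    rw [Matrix.mul_apply]
    simp only [hJ, Matrix.of_apply, ite_mul, zero_mul]
    rw [Finset.sum_ite_eq Finset.univ (a * w₀)]
    simp only [Finset.mem_univ, if_true, mul_w0_w0 w₀ hw₀]
    rw [Matrix.smul_apply, Matrix.one_apply]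
    by_cases hac : a = c
    · rw [if_pos hac, if_pos hac, smul_eq_mul, mul_one, ← pow_add]
      rw [he]
      congr 1
      have h2 := hw₀ a
      omega
    · rw [if_neg hac, if_neg hac, mul_zero, smul_zero]
  have hJM : ∀ a c : W, (J * Mm) a c
      = (-1 : K) ^ (cs.length a) * Polynomial.aeval v (kl.h (a * w₀) c) := by
    intro a c
    rw [Matrix.mul_apply]
    simp only [hJ, hM, Matrix.of_apply, ite_mul, zero_mul]
    rw [Finset.sum_ite_eq Finset.univ (a * w₀)]
    simp
  have hMJM : Mmᵀ * (J * Mm) = J := by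
    ext x z
    rw [Matrix.mul_apply]
    have hterm : ∀ b : W, Mmᵀ x b * (J * Mm) b z
        = (-1 : K) ^ (cs.length b) * Polynomial.aeval v (kl.h b x)
            * Polynomial.aeval v (kl.h (b * w₀) z) := by
      intro b
      rw [hJM, Matrix.transpose_apply]
      simp only [hM, Matrix.of_apply]
      ring
    rw [Finset.sum_congr rfl fun b _ => hterm b, inversion A kl w₀ hw₀ x z]
    simp [hJ]
  have hL : (ε • (J * Mmᵀ * J)) * Mm = 1 := by
    rw [Matrix.smul_mul]
    have h1 : J * Mmᵀ * J * Mm = J * J := by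
      rw [mul_assoc (J * Mmᵀ), mul_assoc J, hMJM]
    rw [h1, hJJ, smul_smul, hee, one_smul]
  have hR : Mm * (ε • (J * Mmᵀ * J)) = 1 := mul_eq_one_comm.mp hL
  have h2 : ε • (J * J) = 1 := by rw [hJJ, smul_smul, hee, one_smul]
  have h1 : Mm * (J * Mmᵀ) * J = ε • 1 := by
    have h3 : ε • (Mm * (J * Mmᵀ * J)) = 1 := by rw [← Matrix.mul_smul, hR]
    have h4 : Mm * (J * Mmᵀ * J) = ε • (1 : Matrix W W K) := by
      calc Mm * (J * Mmᵀ * J) = (ε * ε) • (Mm * (J * Mmᵀ * J)) := by rw [hee, one_smul]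
        _ = ε • (ε • (Mm * (J * Mmᵀ * J))) := by rw [smul_smul]
        _ = ε • (1 : Matrix W W K) := by rw [h3]
    calc Mm * (J * Mmᵀ) * J = Mm * (J * Mmᵀ * J) := by rw [mul_assoc]
      _ = ε • 1 := h4
  have hMJMt : Mm * (J * Mmᵀ) = J := by
    calc Mm * (J * Mmᵀ) = (Mm * (J * Mmᵀ)) * (ε • (J * J)) := by rw [h2, mul_one]
      _ = ε • ((Mm * (J * Mmᵀ) * J) * J) := by
          rw [Matrix.mul_smul, ← mul_assoc]
      _ = ε • ((ε • (1 : Matrix W W K)) * J) := by rw [h1]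
      _ = J := by rw [Matrix.smul_mul, one_mul, smul_smul, hee, one_smul]
  have hentry := congrFun (congrFun hMJMt u) y
  have hJMt : ∀ x : W, (J * Mmᵀ) x y
      = (-1 : K) ^ (cs.length x) * Polynomial.aeval v (kl.h y (x * w₀)) := by
    intro x
    rw [Matrix.mul_apply]
    simp only [hJ, Matrix.of_apply, ite_mul, zero_mul]
    rw [Finset.sum_ite_eq Finset.univ (x * w₀)]
    simp [hM]
  have hlhs : (Mm * (J * Mmᵀ)) u y = ∑ x : W, (-1 : K) ^ (cs.length x)
      * Polynomial.aeval v (kl.h u x) * Polynomial.aeval v (kl.h y (x * w₀)) := by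
    rw [Matrix.mul_apply]
    refine Finset.sum_congr rfl fun x _ => ?_
    rw [hJMt]
    simp only [hM, Matrix.of_apply]
    ring
  rw [hlhs] at hentry
  rw [hentry]
  simp [hJ]

include hw₀ in
lemma negv_zpow (n : ℕ) : (-v : K) ^ (-(n : ℤ)) = v ^ (-(n : ℤ)) * (-1 : K) ^ n := by
  rw [zpow_neg, zpow_neg, zpow_natCast, zpow_natCast, neg_pow, mul_inv]
  rw [← inv_pow, inv_neg, inv_one, mul_comm]

include hw₀ in
lemma coeff_identity (y : W) :
    (∑ x : W, ((-1 : K) ^ (cs.length (x * w₀)) * kl.P (x * w₀)) * Polynomial.aeval v (kl.h y x))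
      = (-v) ^ (-(cs.length (y * w₀) : ℤ)) := by
  have hstep : ∀ u : W,
      (∑ x : W, (-1 : K) ^ (cs.length (x * w₀)) * Polynomial.aeval v (kl.h u (x * w₀))
        * Polynomial.aeval v (kl.h y x))
      = if u * w₀ = y then (-1 : K) ^ (cs.length u) else 0 := by
    intro u
    rw [← inversion_transposed A kl w₀ hw₀ u y]
    refine Fintype.sum_equiv (Equiv.mulRight w₀) _ _ fun x => ?_
    simp only [Equiv.coe_mulRight, mul_w0_w0 w₀ hw₀]
  calc (∑ x : W, ((-1 : K) ^ (cs.length (x * w₀)) * kl.P (x * w₀))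
          * Polynomial.aeval v (kl.h y x))
      = ∑ x : W, ∑ u : W, v ^ (-(cs.length u : ℤ))
          * ((-1 : K) ^ (cs.length (x * w₀)) * Polynomial.aeval v (kl.h u (x * w₀))
            * Polynomial.aeval v (kl.h y x)) := by
        refine Finset.sum_congr rfl fun x _ => ?_
        rw [KLBasis.P, Finset.mul_sum, Finset.sum_mul]
        refine Finset.sum_congr rfl fun u _ => ?_
        ring
    _ = ∑ u : W, v ^ (-(cs.length u : ℤ))
          * ∑ x : W, ((-1 : K) ^ (cs.length (x * w₀)) * Polynomial.aeval v (kl.h u (x * w₀))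
            * Polynomial.aeval v (kl.h y x)) := by
        rw [Finset.sum_comm]
        exact Finset.sum_congr rfl fun u _ => by rw [Finset.mul_sum]
    _ = ∑ u : W, v ^ (-(cs.length u : ℤ))
          * (if u = y * w₀ then (-1 : K) ^ (cs.length u) else 0) := by
        refine Finset.sum_congr rfl fun u _ => ?_
        rw [hstep u]
        congr 1
        have hcond : (u * w₀ = y) = (u = y * w₀) := by
          apply propext
          constructor
          · intro h3; rw [← h3, mul_w0_w0 w₀ hw₀]
          · intro h3; rw [h3, mul_w0_w0 w₀ hw₀]
        exact if_congr (iff_of_eq hcond) rfl rfl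
    _ = (-v) ^ (-(cs.length (y * w₀) : ℤ)) := by
        simp only [mul_ite, mul_zero]
        rw [Finset.sum_ite_eq' Finset.univ (y * w₀)]
        simp only [Finset.mem_univ, if_true]
        rw [negv_zpow w₀ hw₀]

end Final

end Scratch

/-- For a finite Coxeter system with longest element `w₀`, in the Hecke
algebra one has `Σ_x (−v)^{−ℓ(x w₀)} δ_x = Σ_x (−1)^{ℓ(x w₀)} P_{x w₀} b_x`. -/
theorem antisymmetriser_in_KL_basis
    {B W : Type*} [Group W] [Fintype W] {M : CoxeterMatrix B}
    {cs : CoxeterSystem M W} {H : Type*} [Ring H] [Algebra K H]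
    (A : HeckeAlgebra cs H) (kl : KLBasis A)
    (w₀ : W) (hw₀ : ∀ x : W, cs.length (x * w₀) + cs.length x = cs.length w₀) :
    ∑ x : W, ((-v) ^ (-(cs.length (x * w₀) : ℤ))) • A.δ x
      = ∑ x : W, ((-1 : K) ^ (cs.length (x * w₀)) * kl.P (x * w₀)) • kl.b x := by
  classical
  symm
  calc ∑ x : W, ((-1 : K) ^ (cs.length (x * w₀)) * kl.P (x * w₀)) • kl.b x
      = ∑ x : W, ∑ y : W, (((-1 : K) ^ (cs.length (x * w₀)) * kl.P (x * w₀))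
          * Polynomial.aeval v (kl.h y x)) • A.δ y := by
        refine Finset.sum_congr rfl fun x _ => ?_
        rw [kl.b_eq, Finset.smul_sum]
        exact Finset.sum_congr rfl fun y _ => by rw [smul_smul]
    _ = ∑ y : W, (∑ x : W, ((-1 : K) ^ (cs.length (x * w₀)) * kl.P (x * w₀))
          * Polynomial.aeval v (kl.h y x)) • A.δ y := by
        rw [Finset.sum_comm]
        exact Finset.sum_congr rfl fun y _ => by rw [Finset.sum_smul]
    _ = ∑ x : W, ((-v) ^ (-(cs.length (x * w₀) : ℤ))) • A.δ x :=
        Finset.sum_congr rfl fun y _ => by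
          rw [Scratch.coeff_identity A kl w₀ hw₀ y]
end
end

section
/- Let (W,S) be a finite Coxeter system with longest element w_0 and H its Hecke algebra over ℚ(v), and define μ^s_{y,x} ∈ ℤ[v, v^{−1}] by b_x b_s = Σ_{y ∈ W} μ^s_{y,x} b_y in the Kazhdan–Lusztig basis. Then for every y ∈ W and every s ∈ S: Σ_{x ∈ W} (−1)^{ℓ(x)} P_{x w_0} μ^s_{y,x} = 0. -/
noncomputable section

namespace KLAux

open Polynomial

lemma v_ne_zero : (v : K) ≠ 0 := RatFunc.X_ne_zero

lemma v_mul_inv : (v : K) * v⁻¹ = 1 := mul_inv_cancel₀ v_ne_zero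

lemma aeval_v_eq (p : Polynomial ℤ) :
    aeval (v : K) p = algebraMap (Polynomial ℚ) K (p.map (Int.castRingHom ℚ)) := by
  induction p using Polynomial.induction_on' with
  | add p q hp hq => simp [hp, hq]
  | monomial n a =>
      rw [Polynomial.map_monomial, ← Polynomial.C_mul_X_pow_eq_monomial,
        ← Polynomial.C_mul_X_pow_eq_monomial, map_mul, map_pow, aeval_C, aeval_X,
        map_mul, map_pow, RatFunc.algebraMap_X]
      congr 1

lemma aeval_v_eq_zero {p : Polynomial ℤ} (h : aeval (v : K) p = 0) : p = 0 := by
  rw [aeval_v_eq] at h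
  have h2 : p.map (Int.castRingHom ℚ) = 0 := by
    apply RatFunc.algebraMap_injective ℚ
    simpa using h
  exact Polynomial.map_injective _ Int.cast_injective (by simpa using h2)

lemma aeval_sym_eq_zero {p : Polynomial ℤ} (h0 : p.coeff 0 = 0)
    (hsym : aeval ((v : K)⁻¹) p = aeval (v : K) p) : aeval (v : K) p = 0 := by
  by_cases hp : p = 0
  · simp [hp]
  set n := p.natDegree with hn
  by_cases hn0 : n = 0
  · have : p = C (p.coeff 0) := Polynomial.eq_C_of_natDegree_eq_zero hn0
    rw [this, h0] at hp
    simp at hp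
  -- key identity
  have hpow : ∀ i : ℕ, i ≤ n → (v : K) ^ n * (v⁻¹) ^ i = v ^ (n - i) := by
    intro i hi
    have h1 : (v : K) ^ (n - i) * v ^ i = v ^ n := by
      rw [← pow_add]; congr 1; omega
    rw [← h1]
    have hvi : (v : K) ^ i ≠ 0 := pow_ne_zero _ v_ne_zero
    rw [mul_assoc, ← mul_pow, mul_inv_cancel₀ v_ne_zero, one_pow, mul_one]
  set q : Polynomial ℤ := ∑ i ∈ Finset.range (n + 1), C (p.coeff i) * X ^ (n - i) with hq
  have key : aeval (v : K) (X ^ n * p) = aeval (v : K) q := by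
    rw [map_mul, map_pow, aeval_X, ← hsym]
    rw [Polynomial.aeval_eq_sum_range (R := ℤ) (p := p) ((v : K)⁻¹)]
    rw [hq]
    rw [map_sum, Finset.mul_sum]
    refine Finset.sum_congr rfl fun i hi => ?_
    rw [Finset.mem_range] at hi
    rw [map_mul, map_pow, aeval_X, aeval_C, Algebra.smul_def]
    rw [← hpow i (by omega)]; ring
  have heq : X ^ n * p = q := by
    have := sub_eq_zero.mpr key
    rw [← map_sub] at this
    have h2 := aeval_v_eq_zero this
    exact sub_eq_zero.mp h2
  exfalso
  have hc : (X ^ n * p).coeff (n + n) = p.coeff n := Polynomial.coeff_X_pow_mul p n n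
  have hq2 : q.coeff (n + n) = 0 := by
    rw [hq, Polynomial.finset_sum_coeff]
    refine Finset.sum_eq_zero fun i hi => ?_
    rw [Polynomial.coeff_C_mul, Polynomial.coeff_X_pow, if_neg (by omega), mul_zero]
  rw [heq, hq2] at hc
  exact (Polynomial.leadingCoeff_ne_zero.mpr hp) hc.symm

end KLAux

section Main

open Polynomial KLAux
open scoped Classical
set_option linter.unusedSectionVars false

variable {B W : Type*} [Group W] [Fintype W] {M : CoxeterMatrix B}
  {cs : CoxeterSystem M W} {H : Type*} [Ring H] [Algebra K H]
  (A : HeckeAlgebra cs H) (kl : KLBasis A)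

/-- Strong induction on length, peeling a simple reflection off the right. -/
private lemma length_induction (P : W → Prop) (h1 : P 1)
    (hstep : ∀ (w : W) (i : B), cs.IsRightDescent w i → P (w * cs.simple i) → P w) :
    ∀ w, P w := by
  suffices h : ∀ (n : ℕ) (w : W), cs.length w ≤ n → P w by
    intro w; exact h (cs.length w) w le_rfl
  intro n
  induction n with
  | zero => intro w hw
            have : w = 1 := cs.length_eq_zero_iff.mp (Nat.le_zero.mp hw)
            rwa [this]
  | succ n ih =>
      intro w hw
      by_cases hw1 : w = 1
      · rwa [hw1]
      · obtain ⟨i, hi⟩ := cs.exists_rightDescent_of_ne_one hw1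
        refine hstep w i hi (ih _ ?_)
        have := cs.isRightDescent_iff.mp hi
        omega

private lemma length_induction_left (P : W → Prop) (h1 : P 1)
    (hstep : ∀ (w : W) (i : B), cs.IsLeftDescent w i → P (cs.simple i * w) → P w) :
    ∀ w, P w := by
  suffices h : ∀ (n : ℕ) (w : W), cs.length w ≤ n → P w by
    intro w; exact h (cs.length w) w le_rfl
  intro n
  induction n with
  | zero => intro w hw
            have : w = 1 := cs.length_eq_zero_iff.mp (Nat.le_zero.mp hw)
            rwa [this]
  | succ n ih =>
      intro w hw
      by_cases hw1 : w = 1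
      · rwa [hw1]
      · obtain ⟨i, hi⟩ := cs.exists_leftDescent_of_ne_one hw1
        refine hstep w i hi (ih _ ?_)
        have := cs.isLeftDescent_iff.mp hi
        omega

lemma delta_sq (i : B) :
    A.δ (cs.simple i) * A.δ (cs.simple i) = 1 + (v⁻¹ - v) • A.δ (cs.simple i) := by
  have h := A.quadratic i
  have hexp : (A.δ (cs.simple i) + v • (1 : H)) * (A.δ (cs.simple i) - v⁻¹ • (1 : H))
      = A.δ (cs.simple i) * A.δ (cs.simple i) - (v⁻¹ - v) • A.δ (cs.simple i)
        - (v⁻¹ * v) • (1:H) := by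
    simp only [mul_sub, add_mul, smul_mul_assoc, mul_smul_comm, one_mul, mul_one,
      smul_smul, sub_smul, smul_add, smul_sub]
    abel
  rw [hexp, inv_mul_cancel₀ v_ne_zero, one_smul, sub_sub, sub_eq_zero] at h
  rw [h]; abel

lemma delta_descent {w : W} {i : B} (hd : cs.IsRightDescent w i) :
    A.δ (w * cs.simple i) * A.δ (cs.simple i) = A.δ w := by
  have hlen := cs.isRightDescent_iff.mp hd
  have := A.δ_mul (w * cs.simple i) (cs.simple i) (by
    rw [mul_assoc, cs.simple_mul_simple_self, mul_one, cs.length_simple]; omega)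
  rwa [mul_assoc, cs.simple_mul_simple_self, mul_one] at this

lemma delta_descent_left {w : W} {i : B} (hd : cs.IsLeftDescent w i) :
    A.δ (cs.simple i) * A.δ (cs.simple i * w) = A.δ w := by
  have hlen := cs.isLeftDescent_iff.mp hd
  have := A.δ_mul (cs.simple i) (cs.simple i * w) (by
    rw [← mul_assoc, cs.simple_mul_simple_self, one_mul, cs.length_simple]; omega)
  rwa [← mul_assoc, cs.simple_mul_simple_self, one_mul] at this

lemma isUnit_delta_simple (i : B) : IsUnit (A.δ (cs.simple i)) := by
  set d := A.δ (cs.simple i) with hd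
  refine ⟨⟨d, d - (v⁻¹ - v) • (1:H), ?_, ?_⟩, rfl⟩
  · rw [mul_sub, mul_smul_comm, mul_one, delta_sq]; abel
  · rw [sub_mul, smul_mul_assoc, one_mul, delta_sq]; abel

lemma isUnit_delta (w : W) : IsUnit (A.δ w) := by
  refine length_induction (cs := cs) (fun w => IsUnit (A.δ w)) ?_ ?_ w
  · show IsUnit (A.δ (1:W))
    rw [A.δ_one]; exact isUnit_one
  · intro w i hd hu
    rw [← delta_descent A hd]
    exact hu.mul (isUnit_delta_simple A i)

lemma delta_mul_simple (w : W) (i : B) :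
    A.δ w * A.δ (cs.simple i) = A.δ (w * cs.simple i)
      + if cs.IsRightDescent w i then (v⁻¹ - v) • A.δ w else 0 := by
  by_cases hd : cs.IsRightDescent w i
  · rw [if_pos hd, ← delta_descent A hd, mul_assoc, delta_sq, mul_add, mul_one,
      mul_smul_comm, delta_descent A hd]
  · rw [if_neg hd, add_zero]
    exact A.δ_mul w (cs.simple i) (by
      rw [cs.length_simple]
      exact (cs.not_isRightDescent_iff.mp hd))

lemma simple_mul_delta (i : B) (w : W) :
    A.δ (cs.simple i) * A.δ w = A.δ (cs.simple i * w)
      + if cs.IsLeftDescent w i then (v⁻¹ - v) • A.δ w else 0 := by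
  by_cases hd : cs.IsLeftDescent w i
  · rw [if_pos hd, ← delta_descent_left A hd, ← mul_assoc, delta_sq, add_mul, one_mul,
      smul_mul_assoc, delta_descent_left A hd]
  · rw [if_neg hd, add_zero]
    exact A.δ_mul (cs.simple i) w (by
      rw [cs.length_simple]
      have := cs.not_isLeftDescent_iff.mp hd
      omega)

/-- Expansion of any element in the `δ` basis. -/
lemma delta_expand (a : H) : a = ∑ z : W, A.basis.repr a z • A.δ z := by
  conv_lhs => rw [← A.basis.sum_repr a]
  exact Finset.sum_congr rfl fun z _ => by rw [A.basis_eq]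

/-- The coefficient of `δ_1`. -/
def tau (a : H) : K := A.basis.repr a 1

lemma tau_delta (z : W) : tau A (A.δ z) = if z = 1 then 1 else 0 := by
  rw [tau, ← A.basis_eq, A.basis.repr_self, Finsupp.single_apply]

lemma tau_add (a b : H) : tau A (a + b) = tau A a + tau A b := by
  simp [tau]

lemma tau_smul (c : K) (a : H) : tau A (c • a) = c * tau A a := by
  simp [tau]

lemma tau_sum {α : Type*} (s : Finset α) (f : α → H) :
    tau A (∑ x ∈ s, f x) = ∑ x ∈ s, tau A (f x) := by
  simp [tau]

lemma tau_delta_mul (x y : W) :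
    tau A (A.δ x * A.δ y) = if x * y = 1 then 1 else 0 := by
  induction y using length_induction_left (cs := cs) generalizing x with
  | h1 => rw [A.δ_one, mul_one, mul_one, tau_delta]
  | hstep y i hd ih =>
      have hy : A.δ (cs.simple i) * A.δ (cs.simple i * y) = A.δ y := delta_descent_left A hd
      have hss : (x * cs.simple i) * (cs.simple i * y) = x * y := by
        rw [mul_assoc, ← mul_assoc (cs.simple i) (cs.simple i) y,
          cs.simple_mul_simple_self, one_mul]
      rw [← hy, ← mul_assoc, delta_mul_simple, add_mul]
      by_cases hxd : cs.IsRightDescent x i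
      · rw [if_pos hxd, smul_mul_assoc, tau_add, tau_smul, ih, ih, hss]
        have hne : ¬ (x * (cs.simple i * y) = 1) := by
          intro hcon
          have hx : x = (cs.simple i * y)⁻¹ := eq_inv_of_mul_eq_one_left hcon
          have h1 : cs.length (x * cs.simple i) = cs.length y := by
            rw [hx]
            have : (cs.simple i * y)⁻¹ * cs.simple i = y⁻¹ := by
              rw [mul_inv_rev, mul_assoc, cs.inv_simple, cs.simple_mul_simple_self, mul_one]
            rw [this, cs.length_inv]
          have h2 : cs.length x = cs.length (cs.simple i * y) := by
            rw [hx, cs.length_inv]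
          have h3 := cs.isRightDescent_iff.mp hxd
          have h4 := cs.isLeftDescent_iff.mp hd
          omega
        rw [if_neg hne, mul_zero, add_zero]
      · rw [if_neg hxd, zero_mul, tau_add, ih, hss]
        have : tau A 0 = 0 := by simp [tau]
        rw [this, add_zero]

lemma bar_expand (a : H) :
    kl.bar a = ∑ z : W, kl.barK (A.basis.repr a z) • kl.bar (A.δ z) := by
  conv_lhs => rw [delta_expand A a]
  rw [map_sum]
  exact Finset.sum_congr rfl fun z _ => kl.bar_smul _ _


end Main

section W0

open Polynomial KLAux
open scoped Classical
set_option linter.unusedSectionVars false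

variable {B W : Type*} [Group W] [Fintype W] {M : CoxeterMatrix B}
  {cs : CoxeterSystem M W} {H : Type*} [Ring H] [Algebra K H]
  (A : HeckeAlgebra cs H) (kl : KLBasis A)
  (w₀ : W) (hw₀ : ∀ x : W, cs.length (x * w₀) + cs.length x = cs.length w₀)

include hw₀

lemma w0_sq : w₀ * w₀ = 1 := by
  have := hw₀ w₀
  exact cs.length_eq_zero_iff.mp (by omega)

lemma w0_inv : w₀⁻¹ = w₀ := inv_eq_of_mul_eq_one_right (w0_sq w₀ hw₀)

lemma len_w0_mul (z : W) : cs.length (w₀ * z) + cs.length z = cs.length w₀ := by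
  have h1 : cs.length (w₀ * z) = cs.length (z⁻¹ * w₀) := by
    rw [← cs.length_inv, mul_inv_rev, w0_inv w₀ hw₀]
  have h2 := hw₀ z⁻¹
  rw [cs.length_inv] at h2
  rw [h1]; exact h2

lemma delta_bar_mul_w0 (z : W) : kl.bar (A.δ z) * A.δ w₀ = A.δ (z * w₀) := by
  rw [kl.bar_δ]
  have hprod : A.δ z⁻¹ * A.δ (z * w₀) = A.δ w₀ := by
    have := A.δ_mul z⁻¹ (z * w₀) (by
      rw [cs.length_inv]
      have := hw₀ z
      have heq : z⁻¹ * (z * w₀) = w₀ := by group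
      rw [heq]; omega)
    rwa [(by group : z⁻¹ * (z * w₀) = w₀)] at this
  calc Ring.inverse (A.δ z⁻¹) * A.δ w₀
      = Ring.inverse (A.δ z⁻¹) * (A.δ z⁻¹ * A.δ (z * w₀)) := by rw [hprod]
    _ = (Ring.inverse (A.δ z⁻¹) * A.δ z⁻¹) * A.δ (z * w₀) := by rw [mul_assoc]
    _ = A.δ (z * w₀) := by rw [Ring.inverse_mul_cancel _ (isUnit_delta A z⁻¹), one_mul]

lemma w0_mul_delta_inv (z : W) :
    A.δ w₀ * Ring.inverse (A.δ z) = A.δ (w₀ * z⁻¹) := by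
  have hprod : A.δ (w₀ * z⁻¹) * A.δ z = A.δ w₀ := by
    have hlen : cs.length (w₀ * z⁻¹) + cs.length z = cs.length w₀ := by
      have h1 : cs.length (w₀ * z⁻¹) = cs.length (z * w₀) := by
        rw [← cs.length_inv (z * w₀), mul_inv_rev, w0_inv w₀ hw₀]
      rw [h1]; exact hw₀ z
    have := A.δ_mul (w₀ * z⁻¹) z (by
      rw [(by group : w₀ * z⁻¹ * z = w₀)]; omega)
    rwa [(by group : w₀ * z⁻¹ * z = w₀)] at this
  calc A.δ w₀ * Ring.inverse (A.δ z)
      = (A.δ (w₀ * z⁻¹) * A.δ z) * Ring.inverse (A.δ z) := by rw [hprod]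
    _ = A.δ (w₀ * z⁻¹) * (A.δ z * Ring.inverse (A.δ z)) := by rw [mul_assoc]
    _ = A.δ (w₀ * z⁻¹) := by rw [Ring.mul_inverse_cancel _ (isUnit_delta A z), mul_one]

lemma len_conj (x : W) : cs.length (w₀ * x * w₀) = cs.length x := by
  have h1 := hw₀ (w₀ * x)
  have h2 := len_w0_mul w₀ hw₀ x
  omega

lemma w0_conj (x : W) : A.δ w₀ * A.δ x = A.δ (w₀ * x * w₀) * A.δ w₀ := by
  have ha : A.δ (w₀ * x * w₀) * A.δ (w₀ * x⁻¹) = A.δ w₀ := by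
    have hl1 : cs.length (w₀ * x * w₀) = cs.length x := len_conj w₀ hw₀ x
    have hl2 : cs.length (w₀ * x⁻¹) + cs.length x = cs.length w₀ := by
      have := len_w0_mul w₀ hw₀ x⁻¹
      rwa [cs.length_inv] at this
    have heq : (w₀ * x * w₀) * (w₀ * x⁻¹) = w₀ := by
      rw [mul_assoc (w₀ * x) w₀ (w₀ * x⁻¹), ← mul_assoc w₀ w₀ x⁻¹, w0_sq w₀ hw₀, one_mul]
      group
    have := A.δ_mul (w₀ * x * w₀) (w₀ * x⁻¹) (by rw [heq]; omega)
    rwa [heq] at this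
  have hb : A.δ (w₀ * x⁻¹) * A.δ x = A.δ w₀ := by
    have hl2 : cs.length (w₀ * x⁻¹) + cs.length x = cs.length w₀ := by
      have := len_w0_mul w₀ hw₀ x⁻¹
      rwa [cs.length_inv] at this
    have heq : (w₀ * x⁻¹) * x = w₀ := by group
    have := A.δ_mul (w₀ * x⁻¹) x (by rw [heq]; omega)
    rwa [heq] at this
  conv_lhs => rw [← ha]
  rw [mul_assoc, hb]

lemma w0_central (a : H) :
    a * (A.δ w₀ * A.δ w₀) = (A.δ w₀ * A.δ w₀) * a := by
  have hbasis : ∀ x : W, A.δ x * (A.δ w₀ * A.δ w₀) = (A.δ w₀ * A.δ w₀) * A.δ x := by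
    intro x
    have h1 : A.δ w₀ * A.δ x = A.δ (w₀ * x * w₀) * A.δ w₀ := w0_conj A w₀ hw₀ x
    have h2 : A.δ w₀ * A.δ (w₀ * x * w₀) = A.δ x * A.δ w₀ := by
      have := w0_conj A w₀ hw₀ (w₀ * x * w₀)
      have heq : w₀ * (w₀ * x * w₀) * w₀ = x := by
        have hs := w0_sq w₀ hw₀
        rw [← mul_assoc, ← mul_assoc, hs, one_mul, mul_assoc, hs, mul_one]
      rwa [heq] at this
    rw [mul_assoc, h1, ← mul_assoc, ← h2, mul_assoc, ← mul_assoc]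
  conv_lhs => rw [delta_expand A a]
  conv_rhs => rw [delta_expand A a]
  rw [Finset.sum_mul, Finset.mul_sum]
  exact Finset.sum_congr rfl fun z _ => by
    rw [smul_mul_assoc, mul_smul_comm, hbasis z]

/-- The key compatibility between `tau` and the bar involution. -/
lemma tau_bar (a : H) :
    tau A (kl.bar a * (A.δ w₀ * A.δ w₀)) = kl.barK (tau A a) := by
  rw [bar_expand A kl a, Finset.sum_mul, tau_sum]
  have hterm : ∀ z : W, tau A ((kl.barK (A.basis.repr a z) • kl.bar (A.δ z))
      * (A.δ w₀ * A.δ w₀)) = if z = 1 then kl.barK (A.basis.repr a z) else 0 := by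
    intro z
    rw [smul_mul_assoc, tau_smul, ← mul_assoc, delta_bar_mul_w0 A kl w₀ hw₀ z,
      tau_delta_mul]
    have hcond : (z * w₀ * w₀ = 1) = (z = 1) := by
      rw [mul_assoc, w0_sq w₀ hw₀, mul_one]
    rw [hcond]
    split <;> simp
  rw [Finset.sum_congr rfl fun z _ => hterm z, Finset.sum_ite_eq' Finset.univ 1
    (fun z => kl.barK (A.basis.repr a z)), if_pos (Finset.mem_univ 1)]
  rfl

end W0

section EtaIota

open Polynomial KLAux
open scoped Classical
set_option linter.unusedSectionVars false

variable {B W : Type*} [Group W] [Fintype W] {M : CoxeterMatrix B}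
  {cs : CoxeterSystem M W} {H : Type*} [Ring H] [Algebra K H]
  (A : HeckeAlgebra cs H) (kl : KLBasis A)

/-- The sign-twisted automorphism `η : δ_x ↦ (-1)^{ℓ(x)} bar(δ_x)`. -/
def etaH : H →ₗ[K] H :=
  A.basis.constr K fun x => ((-1 : K) ^ cs.length x) • kl.bar (A.δ x)

lemma eta_delta (x : W) :
    etaH A kl (A.δ x) = ((-1 : K) ^ cs.length x) • kl.bar (A.δ x) := by
  conv_lhs => rw [← A.basis_eq x]
  exact A.basis.constr_basis K _ x

/-- The linear extension of `ι : δ_x ↦ δ_{x⁻¹}`. -/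
def iotaH : H →ₗ[K] H := A.basis.constr K fun x => A.δ x⁻¹

lemma iota_delta (x : W) : iotaH A (A.δ x) = A.δ x⁻¹ := by
  conv_lhs => rw [← A.basis_eq x]
  exact A.basis.constr_basis K _ x

lemma eta_one : etaH A kl 1 = 1 := by
  rw [← A.δ_one, eta_delta, cs.length_one, pow_zero, one_smul, A.δ_one, map_one]

lemma iota_one : iotaH A 1 = 1 := by
  rw [← A.δ_one, iota_delta, inv_one]

lemma barK_v_inv : kl.barK v⁻¹ = v := by
  rw [map_inv₀, kl.barK_v, inv_inv]

lemma neg_one_pow_mul_self (n : ℕ) : ((-1 : K)) ^ n * (-1) ^ n = 1 := by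
  rw [← pow_add]
  exact Even.neg_one_pow ⟨n, rfl⟩

lemma eta_mul_simple (a : H) (i : B) :
    etaH A kl (a * A.δ (cs.simple i))
      = etaH A kl a * etaH A kl (A.δ (cs.simple i)) := by
  have hbasis : ∀ x : W, etaH A kl (A.δ x * A.δ (cs.simple i))
      = etaH A kl (A.δ x) * etaH A kl (A.δ (cs.simple i)) := by
    intro x
    rw [delta_mul_simple, eta_delta, eta_delta, cs.length_simple, pow_one,
      smul_mul_assoc, mul_smul_comm, smul_smul]
    by_cases hd : cs.IsRightDescent x i
    · have hlen := cs.isRightDescent_iff.mp hd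
      rw [if_pos hd, map_add, eta_delta, map_smul, eta_delta]
      have hbar : kl.bar (A.δ x) * kl.bar (A.δ (cs.simple i))
          = kl.bar (A.δ (x * cs.simple i)) + (v - v⁻¹) • kl.bar (A.δ x) := by
        rw [← map_mul, delta_mul_simple, if_pos hd, map_add, kl.bar_smul,
          map_sub, barK_v_inv, kl.barK_v]
      rw [hbar, smul_add, smul_smul]
      congr 1
      · congr 1
        rw [← hlen, pow_succ]
        ring
      · rw [smul_smul]
        congr 1
        ring
    · have hlen := cs.not_isRightDescent_iff.mp hd
      rw [if_neg hd, add_zero, eta_delta]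
      have hbar : kl.bar (A.δ x) * kl.bar (A.δ (cs.simple i))
          = kl.bar (A.δ (x * cs.simple i)) := by
        rw [← map_mul, delta_mul_simple, if_neg hd, add_zero]
      rw [hbar, hlen, pow_succ]
  conv_lhs => rw [delta_expand A a, Finset.sum_mul]
  rw [map_sum]
  conv_rhs => rw [delta_expand A a, map_sum, Finset.sum_mul]
  refine Finset.sum_congr rfl fun z _ => ?_
  rw [smul_mul_assoc, map_smul, map_smul, smul_mul_assoc, hbasis z]

lemma eta_mul_delta (a : H) (y : W) :
    etaH A kl (a * A.δ y) = etaH A kl a * etaH A kl (A.δ y) := by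
  induction y using length_induction (cs := cs) generalizing a with
  | h1 => rw [A.δ_one, mul_one, eta_one, mul_one]
  | hstep y i hd ih =>
      have hy : A.δ (y * cs.simple i) * A.δ (cs.simple i) = A.δ y := delta_descent A hd
      rw [← hy, ← mul_assoc, eta_mul_simple, ih, eta_mul_simple, mul_assoc]

lemma eta_mul (a b : H) : etaH A kl (a * b) = etaH A kl a * etaH A kl b := by
  conv_lhs => rw [delta_expand A b, Finset.mul_sum, map_sum]
  conv_rhs => rw [delta_expand A b, map_sum, Finset.mul_sum]
  refine Finset.sum_congr rfl fun z _ => ?_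
  rw [mul_smul_comm, map_smul, map_smul, mul_smul_comm, eta_mul_delta]

lemma iota_mul_simple (a : H) (i : B) :
    iotaH A (a * A.δ (cs.simple i)) = A.δ (cs.simple i) * iotaH A a := by
  have hbasis : ∀ x : W, iotaH A (A.δ x * A.δ (cs.simple i))
      = A.δ (cs.simple i) * iotaH A (A.δ x) := by
    intro x
    rw [delta_mul_simple, iota_delta]
    have hinv : (x * cs.simple i)⁻¹ = cs.simple i * x⁻¹ := by
      rw [mul_inv_rev, cs.inv_simple]
    by_cases hd : cs.IsRightDescent x i
    · have hlen := cs.isRightDescent_iff.mp hd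
      have hld : cs.IsLeftDescent x⁻¹ i := by
        rw [CoxeterSystem.IsLeftDescent]
        have : cs.length (cs.simple i * x⁻¹) = cs.length (x * cs.simple i) := by
          rw [← hinv, cs.length_inv]
        rw [this, cs.length_inv]; omega
      rw [if_pos hd, map_add, map_smul, iota_delta, iota_delta,
        simple_mul_delta, if_pos hld, hinv]
    · have hlen := cs.not_isRightDescent_iff.mp hd
      have hld : ¬ cs.IsLeftDescent x⁻¹ i := by
        rw [CoxeterSystem.IsLeftDescent]
        have : cs.length (cs.simple i * x⁻¹) = cs.length (x * cs.simple i) := by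
          rw [← hinv, cs.length_inv]
        rw [this, cs.length_inv]; omega
      rw [if_neg hd, add_zero, iota_delta, simple_mul_delta, if_neg hld, add_zero, hinv]
  conv_lhs => rw [delta_expand A a, Finset.sum_mul, map_sum]
  conv_rhs => rw [delta_expand A a, map_sum, Finset.mul_sum]
  refine Finset.sum_congr rfl fun z _ => ?_
  rw [smul_mul_assoc, map_smul, map_smul, mul_smul_comm, hbasis z]

lemma iota_mul_delta (a : H) (y : W) :
    iotaH A (a * A.δ y) = A.δ y⁻¹ * iotaH A a := by
  induction y using length_induction (cs := cs) generalizing a with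
  | h1 => rw [A.δ_one, mul_one, inv_one, A.δ_one, one_mul]
  | hstep y i hd ih =>
      have hy : A.δ (y * cs.simple i) * A.δ (cs.simple i) = A.δ y := delta_descent A hd
      have hyinv : A.δ (cs.simple i) * A.δ (y * cs.simple i)⁻¹ = A.δ y⁻¹ := by
        have hlen := cs.isRightDescent_iff.mp hd
        have heq : cs.simple i * (y * cs.simple i)⁻¹ = y⁻¹ := by
          rw [mul_inv_rev, cs.inv_simple, ← mul_assoc, cs.simple_mul_simple_self, one_mul]
        have := A.δ_mul (cs.simple i) (y * cs.simple i)⁻¹ (by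
          rw [heq, cs.length_simple, cs.length_inv, cs.length_inv]; omega)
        rwa [heq] at this
      rw [← hy, ← mul_assoc, iota_mul_simple, ih, ← mul_assoc, hyinv]

lemma iota_antimul (a b : H) : iotaH A (a * b) = iotaH A b * iotaH A a := by
  conv_lhs => rw [delta_expand A b, Finset.mul_sum, map_sum]
  conv_rhs => rw [delta_expand A b, map_sum, Finset.sum_mul]
  refine Finset.sum_congr rfl fun z _ => ?_
  rw [mul_smul_comm, map_smul, map_smul, smul_mul_assoc, iota_mul_delta, iota_delta]

lemma bar_bar_delta (x : W) : kl.bar (kl.bar (A.δ x)) = A.δ x := by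
  have h1 : A.δ x⁻¹ * Ring.inverse (A.δ x⁻¹) = 1 :=
    Ring.mul_inverse_cancel _ (isUnit_delta A x⁻¹)
  have h2 := congrArg kl.bar h1
  rw [map_mul, map_one, kl.bar_δ, inv_inv] at h2
  -- h2 : Ring.inverse (A.δ x) * kl.bar (Ring.inverse (A.δ x⁻¹)) = 1
  have h3 := congrArg (fun t => A.δ x * t) h2
  simp only [mul_one] at h3
  rw [← mul_assoc, Ring.mul_inverse_cancel _ (isUnit_delta A x), one_mul] at h3
  rw [kl.bar_δ, h3]

/-- `ι` commutes with the bar involution. -/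
lemma bar_iota_comm (a : H) : kl.bar (iotaH A a) = iotaH A (kl.bar a) := by
  have hbasis : ∀ z : W, kl.bar (iotaH A (A.δ z)) = iotaH A (kl.bar (A.δ z)) := by
    intro z
    rw [iota_delta, kl.bar_δ, kl.bar_δ, inv_inv]
    -- goal : Ring.inverse (A.δ z) = iotaH A (Ring.inverse (A.δ z⁻¹))
    have h1 : A.δ z⁻¹ * Ring.inverse (A.δ z⁻¹) = 1 :=
      Ring.mul_inverse_cancel _ (isUnit_delta A z⁻¹)
    have h2 := congrArg (iotaH A) h1
    rw [iota_antimul, iota_one, iota_delta, inv_inv] at h2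
    -- h2 : iotaH A (Ring.inverse (A.δ z⁻¹)) * A.δ z = 1
    have h3 := congrArg (fun t => t * Ring.inverse (A.δ z)) h2
    simp only [one_mul] at h3
    rw [mul_assoc, Ring.mul_inverse_cancel _ (isUnit_delta A z), mul_one] at h3
    rw [h3]
  conv_lhs => rw [delta_expand A a, map_sum, map_sum]
  conv_rhs => rw [bar_expand A kl a, map_sum]
  refine Finset.sum_congr rfl fun z _ => ?_
  rw [map_smul, kl.bar_smul, map_smul, hbasis z]

/-- `η` commutes with the bar involution. -/
lemma bar_eta_comm (a : H) : kl.bar (etaH A kl a) = etaH A kl (kl.bar a) := by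
  have hbasis : ∀ z : W, kl.bar (etaH A kl (A.δ z)) = etaH A kl (kl.bar (A.δ z)) := by
    intro z
    rw [eta_delta, kl.bar_smul, bar_bar_delta]
    have hb : kl.barK ((-1 : K) ^ cs.length z) = (-1 : K) ^ cs.length z := by
      rw [map_pow, map_neg, map_one]
    rw [hb]
    -- RHS : eta (bar δ_z) = eta (Ring.inverse (δ_{z⁻¹}))
    rw [kl.bar_δ]
    have h1 : A.δ z⁻¹ * Ring.inverse (A.δ z⁻¹) = 1 :=
      Ring.mul_inverse_cancel _ (isUnit_delta A z⁻¹)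
    have h2 := congrArg (etaH A kl) h1
    rw [eta_mul, eta_one, eta_delta, cs.length_inv, kl.bar_δ, inv_inv] at h2
    -- h2 : ((-1)^{ℓ z} • Ring.inverse (A.δ z)) * eta (Ring.inverse (A.δ z⁻¹)) = 1
    have h3 := congrArg (fun t => ((-1 : K) ^ cs.length z • A.δ z) * t) h2
    simp only [mul_one] at h3
    rw [← mul_assoc, smul_mul_assoc, mul_smul_comm, smul_smul, neg_one_pow_mul_self,
      one_smul, Ring.mul_inverse_cancel _ (isUnit_delta A z), one_mul] at h3
    rw [h3]
  conv_lhs => rw [delta_expand A a, map_sum, map_sum]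
  conv_rhs => rw [bar_expand A kl a, map_sum]
  refine Finset.sum_congr rfl fun z _ => ?_
  rw [map_smul, kl.bar_smul, map_smul, hbasis z]

end EtaIota

section NNSec

open Polynomial KLAux
open scoped Classical
set_option linter.unusedSectionVars false

variable {B W : Type*} [Group W] [Fintype W] {M : CoxeterMatrix B}
  {cs : CoxeterSystem M W} {H : Type*} [Ring H] [Algebra K H]
  (A : HeckeAlgebra cs H) (kl : KLBasis A)

/-- The sign element `N = Σ_w (-v)^{ℓ(w)} δ_w`. -/
def NN : H := ∑ w : W, ((-v : K) ^ cs.length w) • A.δ w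

lemma NN_mul_simple (i : B) : NN A * A.δ (cs.simple i) = (-v) • NN A := by
  rw [NN, Finset.sum_mul]
  have h1 : ∀ w : W, ((-v : K) ^ cs.length w • A.δ w) * A.δ (cs.simple i)
      = (-v : K) ^ cs.length w • A.δ (w * cs.simple i)
        + (if cs.IsRightDescent w i
            then ((v⁻¹ - v) * (-v) ^ cs.length w) • A.δ w else 0) := by
    intro w
    rw [smul_mul_assoc, delta_mul_simple, smul_add]
    congr 1
    split
    · rw [smul_smul, mul_comm]
    · rw [smul_zero]
  rw [Finset.sum_congr rfl fun w _ => h1 w, Finset.sum_add_distrib]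
  have h2 : ∑ w : W, (-v : K) ^ cs.length w • A.δ (w * cs.simple i)
      = ∑ w : W, (-v : K) ^ cs.length (w * cs.simple i) • A.δ w := by
    rw [← Equiv.sum_comp (Equiv.mulRight (cs.simple i))
      (fun u : W => (-v : K) ^ cs.length (u * cs.simple i) • A.δ u)]
    refine Finset.sum_congr rfl fun x _ => ?_
    simp only [Equiv.coe_mulRight]
    rw [mul_assoc, cs.simple_mul_simple_self, mul_one]
  rw [h2, ← Finset.sum_add_distrib, Finset.smul_sum]
  refine Finset.sum_congr rfl fun w _ => ?_
  rw [smul_smul]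
  rcases cs.length_mul_simple w i with hc | hc
  · rw [if_neg (by rw [CoxeterSystem.IsRightDescent]; omega), add_zero, hc, pow_succ]
    congr 1; ring
  · rw [if_pos (by rw [CoxeterSystem.IsRightDescent]; omega), ← add_smul]
    congr 1
    have hl : cs.length w = cs.length (w * cs.simple i) + 1 := by omega
    rw [hl, pow_succ]
    have hv : (v : K) ≠ 0 := v_ne_zero
    field_simp
    ring

lemma NN_mul_delta (y : W) : NN A * A.δ y = ((-v : K) ^ cs.length y) • NN A := by
  induction y using length_induction (cs := cs) with
  | h1 => rw [A.δ_one, mul_one, cs.length_one, pow_zero, one_smul]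
  | hstep y i hd ih =>
      have hy : A.δ (y * cs.simple i) * A.δ (cs.simple i) = A.δ y := delta_descent A hd
      have hlen := cs.isRightDescent_iff.mp hd
      rw [← hy, ← mul_assoc, ih, smul_mul_assoc, NN_mul_simple, smul_smul, ← hlen, pow_succ]

lemma tau_NN : tau A (NN A) = 1 := by
  rw [NN, tau_sum]
  have h1 : ∀ w : W, tau A (((-v : K) ^ cs.length w) • A.δ w)
      = if w = 1 then (-v : K) ^ cs.length w else 0 := by
    intro w
    rw [tau_smul, tau_delta, mul_ite, mul_one, mul_zero]
  rw [Finset.sum_congr rfl fun w _ => h1 w,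
    Finset.sum_ite_eq' Finset.univ 1 (fun w => (-v : K) ^ cs.length w),
    if_pos (Finset.mem_univ 1), cs.length_one, pow_zero]

variable (w₀ : W) (hw₀ : ∀ x : W, cs.length (x * w₀) + cs.length x = cs.length w₀)

include hw₀

lemma bar_NN_w0 : kl.bar (NN A) * (A.δ w₀ * A.δ w₀) = NN A := by
  have hbar : kl.bar (NN A) = ∑ w : W, ((-v⁻¹ : K) ^ cs.length w) • kl.bar (A.δ w) := by
    rw [NN, map_sum]
    refine Finset.sum_congr rfl fun w _ => ?_
    rw [kl.bar_smul]
    congr 1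
    rw [map_pow, map_neg, kl.barK_v]
  have hmul1 : kl.bar (NN A) * A.δ w₀
      = (((-1 : K) ^ cs.length w₀ * (v ^ cs.length w₀)⁻¹)) • NN A := by
    rw [hbar, Finset.sum_mul]
    have h1 : ∀ w : W, (((-v⁻¹ : K) ^ cs.length w) • kl.bar (A.δ w)) * A.δ w₀
        = ((-v⁻¹ : K) ^ cs.length w) • A.δ (w * w₀) := by
      intro w
      rw [smul_mul_assoc, delta_bar_mul_w0 A kl w₀ hw₀]
    rw [Finset.sum_congr rfl fun w _ => h1 w]
    have h2 : ∑ w : W, ((-v⁻¹ : K) ^ cs.length w) • A.δ (w * w₀)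
        = ∑ u : W, ((-v⁻¹ : K) ^ cs.length (u * w₀)) • A.δ u := by
      rw [← Equiv.sum_comp (Equiv.mulRight w₀)
        (fun u : W => ((-v⁻¹ : K) ^ cs.length (u * w₀)) • A.δ u)]
      refine Finset.sum_congr rfl fun x _ => ?_
      simp only [Equiv.coe_mulRight]
      rw [mul_assoc, w0_sq w₀ hw₀, mul_one]
    rw [h2]
    unfold NN
    rw [Finset.smul_sum]
    refine Finset.sum_congr rfl fun u _ => ?_
    rw [smul_smul]
    congr 1
    have hsum := hw₀ u
    have hv : (v : K) ≠ 0 := v_ne_zero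
    rw [← hsum, pow_add, pow_add, neg_pow v⁻¹, neg_pow v, inv_pow]
    field_simp
    ring_nf
    rw [show ((-1:K)) ^ (cs.length u * 2) = 1 from
      Even.neg_one_pow ⟨cs.length u, by ring⟩]
  rw [← mul_assoc, hmul1, smul_mul_assoc, NN_mul_delta, smul_smul]
  have hv : (v : K) ≠ 0 := v_ne_zero
  have hscal : ((-1 : K) ^ cs.length w₀ * (v ^ cs.length w₀)⁻¹)
      * (-v) ^ cs.length w₀ = 1 := by
    rw [neg_pow v]
    field_simp
    rw [← pow_mul]
    exact Even.neg_one_pow ⟨cs.length w₀, by ring⟩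
  rw [hscal, one_smul]

lemma barK_aeval (p : Polynomial ℤ) :
    kl.barK (Polynomial.aeval (v : K) p) = Polynomial.aeval (v⁻¹ : K) p := by
  rw [Polynomial.aeval_def, Polynomial.aeval_def, Polynomial.hom_eval₂, kl.barK_v]
  congr 1
  exact Subsingleton.elim _ _

lemma NN_mul_b_zero (i : B) : NN A * kl.b (cs.simple i) = 0 := by
  have hNb : NN A * kl.b (cs.simple i)
      = (∑ z : W, Polynomial.aeval (v : K) (kl.h z (cs.simple i)) * (-v) ^ cs.length z)
        • NN A := by
    rw [kl.b_eq, Finset.mul_sum, Finset.sum_smul]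
    refine Finset.sum_congr rfl fun z _ => ?_
    rw [mul_smul_comm, NN_mul_delta, smul_smul]
  set σ : K := ∑ z : W, Polynomial.aeval (v : K) (kl.h z (cs.simple i))
    * (-v) ^ cs.length z with hσ
  have hval : σ = tau A (NN A * kl.b (cs.simple i)) := by
    rw [hNb, tau_smul, tau_NN, mul_one]
  have hinv : kl.barK (tau A (NN A * kl.b (cs.simple i)))
      = tau A (NN A * kl.b (cs.simple i)) := by
    rw [← tau_bar A kl w₀ hw₀ (NN A * kl.b (cs.simple i))]
    congr 1
    rw [map_mul, kl.bar_b, mul_assoc, w0_central A w₀ hw₀ (kl.b (cs.simple i)),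
      ← mul_assoc, bar_NN_w0 A kl w₀ hw₀]
  have hpoly : σ = Polynomial.aeval (v : K)
      (∑ z : W, kl.h z (cs.simple i) * (- Polynomial.X) ^ cs.length z) := by
    rw [hσ, map_sum]
    refine Finset.sum_congr rfl fun z _ => ?_
    rw [map_mul, map_pow, map_neg, Polynomial.aeval_X]
  set q : Polynomial ℤ := ∑ z : W, kl.h z (cs.simple i) * (- Polynomial.X) ^ cs.length z
    with hq
  have hcoeff : q.coeff 0 = 0 := by
    rw [hq, Polynomial.finset_sum_coeff]
    refine Finset.sum_eq_zero fun z _ => ?_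
    rw [Polynomial.mul_coeff_zero]
    by_cases hz : z = 1
    · subst hz
      have hne : (1 : W) ≠ cs.simple i := by
        intro h
        have h1 := cs.length_simple i
        rw [← h, cs.length_one] at h1
        omega
      rw [kl.h_lower 1 (cs.simple i) hne, zero_mul]
    · have hl : cs.length z ≠ 0 := fun hc => hz (cs.length_eq_zero_iff.mp hc)
      have hx : ((- Polynomial.X : Polynomial ℤ) ^ cs.length z).coeff 0 = 0 := by
        rw [Polynomial.coeff_zero_eq_eval_zero]
        simp [zero_pow hl]
      rw [hx, mul_zero]
  have hsym : Polynomial.aeval (v⁻¹ : K) q = Polynomial.aeval (v : K) q := by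
    rw [← barK_aeval A kl w₀ hw₀, ← hpoly, hval, hinv, ← hval, hpoly]
  have hzero : Polynomial.aeval (v : K) q = 0 := aeval_sym_eq_zero hcoeff hsym
  have hfin : σ = 0 := by rw [hpoly, hzero]
  rw [hNb, hfin, zero_smul]

end NNSec

section Gram

open Polynomial KLAux
open scoped Classical
set_option linter.unusedSectionVars false
set_option maxHeartbeats 1000000
set_option synthInstance.maxHeartbeats 400000

variable {B W : Type*} [Group W] [Fintype W] {M : CoxeterMatrix B}
  {cs : CoxeterSystem M W} {H : Type*} [Ring H] [Algebra K H]
  (A : HeckeAlgebra cs H) (kl : KLBasis A)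
  (w₀ : W)

/-- The matrix of Kazhdan–Lusztig polynomials evaluated at `v`. -/
def Amat : Matrix W W K := Matrix.of fun y x => Polynomial.aeval (v : K) (kl.h y x)

/-- The Gram matrix of the `w₀`-twisted sign form in the standard basis. -/
def Jmat (_A : HeckeAlgebra cs H) : Matrix W W K :=
  Matrix.of fun y z => if y = z * w₀ then (-1 : K) ^ cs.length z else 0

variable (hw₀ : ∀ x : W, cs.length (x * w₀) + cs.length x = cs.length w₀)

include hw₀

lemma gram_entry (u w : W) :
    ∑ z : W, (-1 : K) ^ cs.length z * Polynomial.aeval (v : K) (kl.h (z * w₀) u)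
        * Polynomial.aeval (v : K) (kl.h z w)
      = if u = w * w₀ then (-1 : K) ^ cs.length w else 0 := by
  -- the element β-pairing
  set X : H := etaH A kl (iotaH A (kl.b w)) with hXdef
  have hm : A.δ w₀ * X
      = ∑ z : W, (Polynomial.aeval (v : K) (kl.h z w) * (-1 : K) ^ cs.length z)
          • A.δ (w₀ * z⁻¹) := by
    rw [hXdef, kl.b_eq w, map_sum, map_sum, Finset.mul_sum]
    refine Finset.sum_congr rfl fun z _ => ?_
    rw [map_smul, iota_delta, map_smul, eta_delta, cs.length_inv, kl.bar_δ, inv_inv,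
      mul_smul_comm, mul_smul_comm, w0_mul_delta_inv A w₀ hw₀ z, smul_smul]
  have htau : tau A (kl.b u * (A.δ w₀ * X))
      = ∑ z : W, (-1 : K) ^ cs.length z * Polynomial.aeval (v : K) (kl.h (z * w₀) u)
          * Polynomial.aeval (v : K) (kl.h z w) := by
    rw [hm, Finset.mul_sum, tau_sum]
    refine Finset.sum_congr rfl fun z _ => ?_
    rw [mul_smul_comm, tau_smul]
    have hbu : tau A (kl.b u * A.δ (w₀ * z⁻¹))
        = Polynomial.aeval (v : K) (kl.h (z * w₀) u) := by
      rw [kl.b_eq u, Finset.sum_mul, tau_sum]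
      have h1 : ∀ y : W, tau A ((Polynomial.aeval (v : K) (kl.h y u)) • A.δ y
          * A.δ (w₀ * z⁻¹))
          = if y = z * w₀ then Polynomial.aeval (v : K) (kl.h y u) else 0 := by
        intro y
        rw [smul_mul_assoc, tau_smul, tau_delta_mul]
        have hcond : (y * (w₀ * z⁻¹) = 1) = (y = z * w₀) := by
          apply propext; constructor
          · intro h
            have h2 := eq_inv_of_mul_eq_one_left h
            rw [h2, mul_inv_rev, inv_inv, w0_inv w₀ hw₀]
          · intro h
            rw [h, mul_assoc, ← mul_assoc w₀ w₀ z⁻¹, w0_sq w₀ hw₀, one_mul,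
              mul_inv_cancel]
        rw [hcond, mul_ite, mul_one, mul_zero]
      rw [Finset.sum_congr rfl fun y _ => h1 y,
        Finset.sum_ite_eq' Finset.univ (z * w₀)
          (fun y => Polynomial.aeval (v : K) (kl.h y u)), if_pos (Finset.mem_univ _)]
    rw [hbu]; ring
  have hXbar : kl.bar X = X := by
    rw [hXdef, bar_eta_comm, bar_iota_comm, kl.bar_b]
  have hbar : kl.bar (kl.b u * (A.δ w₀ * X)) * (A.δ w₀ * A.δ w₀)
      = kl.b u * (A.δ w₀ * X) := by
    rw [map_mul, map_mul, kl.bar_b, hXbar, kl.bar_δ w₀, w0_inv w₀ hw₀, mul_assoc]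
    congr 1
    calc Ring.inverse (A.δ w₀) * X * (A.δ w₀ * A.δ w₀)
        = Ring.inverse (A.δ w₀) * (X * (A.δ w₀ * A.δ w₀)) := by rw [mul_assoc]
      _ = Ring.inverse (A.δ w₀) * ((A.δ w₀ * A.δ w₀) * X) := by
            rw [w0_central A w₀ hw₀ X]
      _ = (Ring.inverse (A.δ w₀) * A.δ w₀) * A.δ w₀ * X := by
            rw [← mul_assoc, ← mul_assoc]
      _ = A.δ w₀ * X := by
            rw [Ring.inverse_mul_cancel _ (isUnit_delta A w₀), one_mul]
  have hfix : kl.barK (tau A (kl.b u * (A.δ w₀ * X)))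
      = tau A (kl.b u * (A.δ w₀ * X)) := by
    rw [← tau_bar A kl w₀ hw₀ (kl.b u * (A.δ w₀ * X)), hbar]
  -- now the polynomial argument
  set r : Polynomial ℤ :=
    ∑ z : W, (-1 : Polynomial ℤ) ^ cs.length z * (kl.h (z * w₀) u * kl.h z w) with hr
  have hreval : Polynomial.aeval (v : K) r
      = ∑ z : W, (-1 : K) ^ cs.length z * Polynomial.aeval (v : K) (kl.h (z * w₀) u)
          * Polynomial.aeval (v : K) (kl.h z w) := by
    rw [hr, map_sum]
    refine Finset.sum_congr rfl fun z _ => ?_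
    rw [map_mul, map_mul, map_pow, map_neg, map_one, mul_assoc]
  set t : ℤ := if u = w * w₀ then (-1) ^ cs.length w else 0 with ht
  have hcoeffh : ∀ (a b : W), (kl.h a b).coeff 0 = if a = b then 1 else 0 := by
    intro a b
    by_cases hab : a = b
    · rw [if_pos hab, hab, kl.h_self, Polynomial.coeff_one_zero]
    · rw [if_neg hab, kl.h_lower a b hab]
  have hrc : r.coeff 0 = t := by
    rw [hr, Polynomial.finset_sum_coeff]
    have h1 : ∀ z : W, ((-1 : Polynomial ℤ) ^ cs.length z
        * (kl.h (z * w₀) u * kl.h z w)).coeff 0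
        = if z = w then ((-1 : ℤ) ^ cs.length z * if z * w₀ = u then 1 else 0) else 0 := by
      intro z
      rw [Polynomial.mul_coeff_zero, Polynomial.mul_coeff_zero, hcoeffh, hcoeffh]
      have hm1 : ((-1 : Polynomial ℤ) ^ cs.length z).coeff 0 = (-1 : ℤ) ^ cs.length z := by
        rw [Polynomial.coeff_zero_eq_eval_zero, Polynomial.eval_pow, Polynomial.eval_neg,
          Polynomial.eval_one]
      rw [hm1]
      by_cases hzw : z = w
      · rw [if_pos hzw, if_pos hzw, mul_ite, mul_one, mul_zero, mul_ite, mul_one, mul_zero]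
      · rw [if_neg hzw, if_neg hzw, mul_zero, mul_zero]
    rw [Finset.sum_congr rfl fun z _ => h1 z,
      Finset.sum_ite_eq' Finset.univ w
        (fun z => (-1 : ℤ) ^ cs.length z * if z * w₀ = u then 1 else 0),
      if_pos (Finset.mem_univ _), ht]
    by_cases hc : u = w * w₀
    · rw [if_pos hc.symm, if_pos hc, mul_one]
    · rw [if_neg (fun h => hc h.symm), if_neg hc, mul_zero]
  have hq0 : (r - Polynomial.C t).coeff 0 = 0 := by
    rw [Polynomial.coeff_sub, hrc, Polynomial.coeff_C_zero, sub_self]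
  have hsym : Polynomial.aeval ((v : K)⁻¹) (r - Polynomial.C t)
      = Polynomial.aeval (v : K) (r - Polynomial.C t) := by
    rw [← barK_aeval A kl w₀ hw₀]
    have hCt : kl.barK (Polynomial.aeval (v : K) (Polynomial.C t))
        = Polynomial.aeval (v : K) (Polynomial.C t) := by
      rw [Polynomial.aeval_C]
      simpa using map_intCast kl.barK t
    rw [map_sub, map_sub, hCt, hreval, ← htau, hfix]
  have hzero := aeval_sym_eq_zero hq0 hsym
  have hfinal : Polynomial.aeval (v : K) r = (algebraMap ℤ K) t := by
    rw [map_sub, Polynomial.aeval_C] at hzero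
    have := sub_eq_zero.mp hzero
    exact this
  rw [← hreval, hfinal, ht]
  by_cases hc : u = w * w₀
  · rw [if_pos hc, if_pos hc]
    push_cast
    ring
  · rw [if_neg hc, if_neg hc, map_zero]

lemma gram_matrix : (Amat A kl).transpose * Jmat w₀ A * Amat A kl = Jmat w₀ A := by
  ext u w
  rw [Matrix.mul_apply]
  have hAJ : ∀ z : W, ((Amat A kl).transpose * Jmat w₀ A) u z
      = (-1 : K) ^ cs.length z * Polynomial.aeval (v : K) (kl.h (z * w₀) u) := by
    intro z
    rw [Matrix.mul_apply]
    have h1 : ∀ y : W, (Amat A kl).transpose u y * Jmat w₀ A y z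
        = if y = z * w₀ then
            Polynomial.aeval (v : K) (kl.h y u) * (-1 : K) ^ cs.length z else 0 := by
      intro y
      rw [Matrix.transpose_apply, Amat, Jmat, Matrix.of_apply, Matrix.of_apply,
        mul_ite, mul_zero]
    rw [Finset.sum_congr rfl fun y _ => h1 y,
      Finset.sum_ite_eq' Finset.univ (z * w₀)
        (fun y => Polynomial.aeval (v : K) (kl.h y u) * (-1 : K) ^ cs.length z),
      if_pos (Finset.mem_univ _)]
    ring
  rw [Finset.sum_congr rfl fun z _ => by rw [hAJ z]]
  have h2 : ∀ z : W, (-1 : K) ^ cs.length z * Polynomial.aeval (v : K) (kl.h (z * w₀) u)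
      * (Amat A kl) z w
      = (-1 : K) ^ cs.length z * Polynomial.aeval (v : K) (kl.h (z * w₀) u)
        * Polynomial.aeval (v : K) (kl.h z w) := by
    intro z; rw [Amat, Matrix.of_apply]
  rw [Finset.sum_congr rfl fun z _ => h2 z, gram_entry A kl w₀ hw₀ u w, Jmat,
    Matrix.of_apply]

lemma J_mul_J : Jmat w₀ A * Jmat w₀ A
    = ((-1 : K) ^ cs.length w₀) • (1 : Matrix W W K) := by
  ext y w
  rw [Matrix.mul_apply]
  have h1 : ∀ z : W, Jmat w₀ A y z * Jmat w₀ A z w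
      = if z = w * w₀ then
          (if y = z * w₀ then (-1 : K) ^ cs.length z else 0) * (-1 : K) ^ cs.length w
        else 0 := by
    intro z
    rw [Jmat, Matrix.of_apply, Matrix.of_apply, mul_ite, mul_zero]
  rw [Finset.sum_congr rfl fun z _ => h1 z,
    Finset.sum_ite_eq' Finset.univ (w * w₀)
      (fun z => (if y = z * w₀ then (-1 : K) ^ cs.length z else 0)
        * (-1 : K) ^ cs.length w),
    if_pos (Finset.mem_univ _)]
  have hww : w * w₀ * w₀ = w := by rw [mul_assoc, w0_sq w₀ hw₀, mul_one]
  rw [hww, Matrix.smul_apply, Matrix.one_apply]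
  by_cases hyw : y = w
  · rw [if_pos hyw, if_pos hyw, ← pow_add, smul_eq_mul, mul_one]
    congr 1
    exact hw₀ w
  · rw [if_neg hyw, if_neg hyw, zero_mul, smul_zero]

lemma B_mul_A : (((-1 : K) ^ cs.length w₀)
      • (Jmat w₀ A * (Amat A kl).transpose * Jmat w₀ A)) * Amat A kl = 1 := by
  rw [Matrix.smul_mul]
  have h1 : Jmat w₀ A * (Amat A kl).transpose * Jmat w₀ A * Amat A kl
      = Jmat w₀ A * ((Amat A kl).transpose * Jmat w₀ A * Amat A kl) := by
    simp only [Matrix.mul_assoc]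
  rw [h1, gram_matrix A kl w₀ hw₀, J_mul_J A w₀ hw₀, smul_smul,
    neg_one_pow_mul_self, one_smul]

lemma AJA : Amat A kl * Jmat w₀ A * (Amat A kl).transpose = Jmat w₀ A := by
  have h1 := mul_eq_one_comm.mp (B_mul_A A kl w₀ hw₀)
  rw [Matrix.mul_smul] at h1
  have h2 := congrArg (fun N : Matrix W W K => N * Jmat w₀ A) h1
  rw [Matrix.smul_mul, Matrix.one_mul] at h2
  have h3 : Amat A kl * (Jmat w₀ A * (Amat A kl).transpose * Jmat w₀ A)
        * Jmat w₀ A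
      = (Amat A kl * Jmat w₀ A * (Amat A kl).transpose)
        * (Jmat w₀ A * Jmat w₀ A) := by
    simp only [Matrix.mul_assoc]
  rw [h3, J_mul_J A w₀ hw₀, Matrix.mul_smul, Matrix.mul_one, smul_smul,
    neg_one_pow_mul_self, one_smul] at h2
  exact h2

lemma AJAT_entry (u y : W) :
    ∑ x : W, (-1 : K) ^ cs.length x * Polynomial.aeval (v : K) (kl.h u (x * w₀))
        * Polynomial.aeval (v : K) (kl.h y x)
      = if u = y * w₀ then (-1 : K) ^ cs.length y else 0 := by
  have hAJA : Amat A kl * (Jmat w₀ A * (Amat A kl).transpose) = Jmat w₀ A := by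
    rw [← Matrix.mul_assoc]
    exact AJA A kl w₀ hw₀
  have h := congrFun (congrFun hAJA u) y
  rw [Matrix.mul_apply] at h
  have hJA : ∀ c : W, (Jmat w₀ A * (Amat A kl).transpose) c y
      = (-1 : K) ^ cs.length (c * w₀) * Polynomial.aeval (v : K) (kl.h y (c * w₀)) := by
    intro c
    rw [Matrix.mul_apply]
    have h1 : ∀ x : W, Jmat w₀ A c x * (Amat A kl).transpose x y
        = if x = c * w₀ then
            (-1 : K) ^ cs.length x * Polynomial.aeval (v : K) (kl.h y x) else 0 := by
      intro x
      rw [Jmat, Matrix.of_apply, Matrix.transpose_apply, Amat, Matrix.of_apply,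
        ite_mul, zero_mul]
      have hcond : (c = x * w₀) = (x = c * w₀) := by
        apply propext; constructor
        · intro hh; rw [hh, mul_assoc, w0_sq w₀ hw₀, mul_one]
        · intro hh; rw [hh, mul_assoc, w0_sq w₀ hw₀, mul_one]
      rw [hcond]
    rw [Finset.sum_congr rfl fun x _ => h1 x,
      Finset.sum_ite_eq' Finset.univ (c * w₀)
        (fun x => (-1 : K) ^ cs.length x * Polynomial.aeval (v : K) (kl.h y x)),
      if_pos (Finset.mem_univ _)]
  rw [Finset.sum_congr rfl fun c _ => by rw [hJA c]] at h
  have hre : ∑ c : W, Amat A kl u c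
        * ((-1 : K) ^ cs.length (c * w₀) * Polynomial.aeval (v : K) (kl.h y (c * w₀)))
      = ∑ x : W, (-1 : K) ^ cs.length x * Polynomial.aeval (v : K) (kl.h u (x * w₀))
        * Polynomial.aeval (v : K) (kl.h y x) := by
    rw [← Equiv.sum_comp (Equiv.mulRight w₀)
      (fun c : W => Amat A kl u c * ((-1 : K) ^ cs.length (c * w₀)
        * Polynomial.aeval (v : K) (kl.h y (c * w₀))))]
    refine Finset.sum_congr rfl fun x _ => ?_
    simp only [Equiv.coe_mulRight]
    have hxw : x * w₀ * w₀ = x := by rw [mul_assoc, w0_sq w₀ hw₀, mul_one]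
    rw [hxw, Amat, Matrix.of_apply]
    ring
  rw [hre] at h
  rw [h, Jmat, Matrix.of_apply]

lemma inv_sum (y : W) :
    ∑ x : W, (-1 : K) ^ cs.length x * kl.P (x * w₀) * Polynomial.aeval (v : K) (kl.h y x)
      = (-1 : K) ^ cs.length y * (v ^ cs.length (y * w₀))⁻¹ := by
  have hP : ∀ x : W, kl.P (x * w₀)
      = ∑ u : W, (v ^ cs.length u)⁻¹ * Polynomial.aeval (v : K) (kl.h u (x * w₀)) := by
    intro x
    rw [KLBasis.P]
    refine Finset.sum_congr rfl fun u _ => ?_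
    rw [zpow_neg, zpow_natCast]
  have step0 : ∀ x : W, (-1 : K) ^ cs.length x * kl.P (x * w₀)
        * Polynomial.aeval (v : K) (kl.h y x)
      = ∑ u : W, (v ^ cs.length u)⁻¹
          * ((-1 : K) ^ cs.length x * Polynomial.aeval (v : K) (kl.h u (x * w₀))
            * Polynomial.aeval (v : K) (kl.h y x)) := by
    intro x
    rw [hP x, Finset.mul_sum, Finset.sum_mul]
    refine Finset.sum_congr rfl fun u _ => ?_
    ring
  rw [Finset.sum_congr rfl fun x _ => step0 x, Finset.sum_comm]
  rw [Finset.sum_congr rfl fun u (_ : u ∈ Finset.univ) => (Finset.mul_sum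
    (Finset.univ) (fun x : W => (-1 : K) ^ cs.length x
      * Polynomial.aeval (v : K) (kl.h u (x * w₀))
      * Polynomial.aeval (v : K) (kl.h y x)) ((v ^ cs.length u)⁻¹)).symm]
  rw [Finset.sum_congr rfl fun u _ => by rw [AJAT_entry A kl w₀ hw₀ u y]]
  have h1 : ∀ u : W, (v ^ cs.length u)⁻¹
        * (if u = y * w₀ then (-1 : K) ^ cs.length y else 0)
      = if u = y * w₀ then (v ^ cs.length u)⁻¹ * (-1 : K) ^ cs.length y else 0 := by
    intro u; rw [mul_ite, mul_zero]
  rw [Finset.sum_congr rfl fun u _ => h1 u,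
    Finset.sum_ite_eq' Finset.univ (y * w₀)
      (fun u => (v ^ cs.length u)⁻¹ * (-1 : K) ^ cs.length y),
    if_pos (Finset.mem_univ _), mul_comm]

end Gram

set_option maxHeartbeats 2000000
set_option synthInstance.maxHeartbeats 1000000

/-- Let `μ^s_{y,x}` be the structure constants defined by
`b_x b_s = Σ_y μ^s_{y,x} b_y` in the Kazhdan–Lusztig basis. Then for every `y ∈ W` and
every simple reflection `s`, `Σ_{x ∈ W} (−1)^{ℓ(x)} P_{x w₀} μ^s_{y,x} = 0`. -/
theorem mu_alternating_sum
    {B W : Type*} [Group W] [Fintype W] {M : CoxeterMatrix B}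
    {cs : CoxeterSystem M W} {H : Type*} [Ring H] [Algebra K H]
    (A : HeckeAlgebra cs H) (kl : KLBasis A)
    (w₀ : W) (hw₀ : ∀ x : W, cs.length (x * w₀) + cs.length x = cs.length w₀)
    (μ : B → W → W → K)
    (hμ : ∀ (s : B) (x : W),
      kl.b x * kl.b (cs.simple s) = ∑ y : W, μ s y x • kl.b y) :
    ∀ (y : W) (s : B),
      ∑ x : W, (-1 : K) ^ (cs.length x) * kl.P (x * w₀) * μ s y x = 0 := by
  intro y s
  have hv : (v : K) ≠ 0 := KLAux.v_ne_zero
  -- Step 1: the element E = Σ_x (-1)^{ℓ x} P_{x w₀} b_x equals v^{-ℓ(w₀)} N.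
  have hE : ∑ x : W, ((-1 : K) ^ cs.length x * kl.P (x * w₀)) • kl.b x
      = (v ^ cs.length w₀)⁻¹ • NN A := by
    have h1 : ∀ x : W, ((-1 : K) ^ cs.length x * kl.P (x * w₀)) • kl.b x
        = ∑ z : W, ((-1 : K) ^ cs.length x * kl.P (x * w₀)
            * Polynomial.aeval (v : K) (kl.h z x)) • A.δ z := by
      intro x
      rw [kl.b_eq x, Finset.smul_sum]
      exact Finset.sum_congr rfl fun z _ => by rw [smul_smul]
    rw [Finset.sum_congr rfl fun x _ => h1 x, Finset.sum_comm]
    have h2 : ∀ z : W, ∑ x : W, ((-1 : K) ^ cs.length x * kl.P (x * w₀)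
          * Polynomial.aeval (v : K) (kl.h z x)) • A.δ z
        = (((-1 : K) ^ cs.length z) * (v ^ cs.length (z * w₀))⁻¹) • A.δ z := by
      intro z
      rw [← Finset.sum_smul, inv_sum A kl w₀ hw₀ z]
    rw [Finset.sum_congr rfl fun z _ => h2 z]
    unfold NN
    rw [Finset.smul_sum]
    refine Finset.sum_congr rfl fun z _ => ?_
    rw [smul_smul]
    congr 1
    have hsum := hw₀ z
    rw [neg_pow v, ← hsum, pow_add]
    field_simp
  -- Step 2: E * b_s = 0.
  have hEb : ∑ x : W, ((-1 : K) ^ cs.length x * kl.P (x * w₀))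
        • (kl.b x * kl.b (cs.simple s)) = 0 := by
    have h1 : ∑ x : W, ((-1 : K) ^ cs.length x * kl.P (x * w₀))
          • (kl.b x * kl.b (cs.simple s))
        = (∑ x : W, ((-1 : K) ^ cs.length x * kl.P (x * w₀)) • kl.b x)
            * kl.b (cs.simple s) := by
      rw [Finset.sum_mul]
      exact Finset.sum_congr rfl fun x _ => (smul_mul_assoc _ _ _).symm
    rw [h1, hE, smul_mul_assoc, NN_mul_b_zero A kl w₀ hw₀ s, smul_zero]
  -- Step 3: expand via the structure constants μ.
  have hT : ∑ y' : W,
      (∑ x : W, (-1 : K) ^ cs.length x * kl.P (x * w₀) * μ s y' x) • kl.b y' = 0 := by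
    have h1 : ∀ x : W, ((-1 : K) ^ cs.length x * kl.P (x * w₀))
          • (kl.b x * kl.b (cs.simple s))
        = ∑ y' : W, ((-1 : K) ^ cs.length x * kl.P (x * w₀) * μ s y' x) • kl.b y' := by
      intro x
      rw [hμ s x, Finset.smul_sum]
      exact Finset.sum_congr rfl fun y' _ => by rw [smul_smul]
    have hchain : ∑ x : W, ((-1 : K) ^ cs.length x * kl.P (x * w₀))
          • (kl.b x * kl.b (cs.simple s))
        = ∑ y' : W, (∑ x : W, (-1 : K) ^ cs.length x * kl.P (x * w₀) * μ s y' x)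
            • kl.b y' := by
      rw [Finset.sum_congr rfl fun x _ => h1 x, Finset.sum_comm]
      exact Finset.sum_congr rfl fun y' _ => (Finset.sum_smul).symm
    rw [← hchain]
    exact hEb
  -- Step 4: extract coefficients using invertibility of the KL matrix.
  classical
  set Tf : W → K :=
    fun y' => ∑ x : W, (-1 : K) ^ cs.length x * kl.P (x * w₀) * μ s y' x with hTf
  have hδ : ∑ z : W, ((Amat A kl).mulVec Tf z) • A.basis z = 0 := by
    have h1 : ∀ z : W, ((Amat A kl).mulVec Tf z) • A.basis z
        = ∑ y' : W, (Tf y') • ((Polynomial.aeval (v : K) (kl.h z y')) • A.δ z) := by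
      intro z
      rw [Matrix.mulVec, dotProduct, Finset.sum_smul, A.basis_eq]
      refine Finset.sum_congr rfl fun y' _ => ?_
      rw [smul_smul, Amat, Matrix.of_apply]
      congr 1
      ring
    rw [Finset.sum_congr rfl fun z _ => h1 z, Finset.sum_comm]
    have h2 : ∀ y' : W, ∑ z : W,
          (Tf y') • ((Polynomial.aeval (v : K) (kl.h z y')) • A.δ z)
        = (Tf y') • kl.b y' := by
      intro y'
      rw [← Finset.smul_sum, ← kl.b_eq]
    rw [Finset.sum_congr rfl fun y' _ => h2 y']
    exact hT
  have hmv0 : (Amat A kl).mulVec Tf = 0 := by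
    funext z
    exact Fintype.linearIndependent_iff.mp A.basis.linearIndependent _ hδ z
  have hT0 : Tf = 0 := by
    have hBA := B_mul_A A kl w₀ hw₀
    calc Tf = Matrix.mulVec 1 Tf := (Matrix.one_mulVec Tf).symm
      _ = Matrix.mulVec ((((-1 : K) ^ cs.length w₀)
            • (Jmat w₀ A * (Amat A kl).transpose * Jmat w₀ A)) * Amat A kl) Tf := by
          rw [hBA]
      _ = Matrix.mulVec (((-1 : K) ^ cs.length w₀)
            • (Jmat w₀ A * (Amat A kl).transpose * Jmat w₀ A))
            ((Amat A kl).mulVec Tf) :=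
          (Matrix.mulVec_mulVec Tf _ _).symm
      _ = 0 := by rw [hmv0, Matrix.mulVec_zero]
  have hfin := congrFun hT0 y
  simpa using hfin
end
end
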